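/- arXiv:2505.12933 — 8 statements merged into one kernel-verified Lean document; each statement's English description precedes it below -/
import Mathlib

section
/- Let R be a valuation ring with fraction field K and valuation v, and let n be a natural number. For any n×n matrix g over K, there exist k₁, k₂ ∈ GL_n(R) such that k₁·g·k₂ is a diagonal matrix whose diagonal entries have monotonically decreasing valuation (i.e. the valuation of the (i,i)-entry is weakly decreasing in i), and the supremum of the valuations of the entries of k₁·g·k₂ equals the supremum of the valuations of the entries of g. -/
open Matrix

/-- Supremum of the valuations of the entries of a matrix (over a nonempty finite index type). -/
noncomputable def Matrix.coeffsSup {R : Type*} [CommRing R] [IsDomain R] [ValuationRing R]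
    {K : Type*} [Field K] [Algebra R K] [IsFractionRing R K]
    {m : Type*} [Fintype m] [Nonempty m] (g : Matrix m m K) : ValuationRing.ValueGroup R K :=
  Finset.univ.sup' Finset.univ_nonempty
    (fun p : m × m => ValuationRing.valuation R K (g p.1 p.2))

/-- A square matrix over `K` is *monotone diagonal* if it is diagonal and the valuations of
its diagonal entries are weakly decreasing. -/
def Matrix.IsMonotoneDiag {R : Type*} [CommRing R] [IsDomain R] [ValuationRing R]
    {K : Type*} [Field K] [Algebra R K] [IsFractionRing R K]
    {n : ℕ} (g : Matrix (Fin n) (Fin n) K) : Prop :=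
  g.IsDiag ∧ Antitone fun i => ValuationRing.valuation R K (g i i)


namespace TrafoAux

variable {R : Type*} [CommRing R] [IsDomain R] [ValuationRing R]
  {K : Type*} [Field K] [Algebra R K] [IsFractionRing R K]

local notation "vv" => ValuationRing.valuation R K

/-- entries are integral -/
def IsInt {m : Type*} [Fintype m] (A : Matrix m m K) : Prop :=
  ∀ i j, ValuationRing.valuation R K (A i j) ≤ 1

variable {m : Type*} [Fintype m]

theorem isInt_one [DecidableEq m] : IsInt (R := R) (1 : Matrix m m K) := by
  intro i j
  rcases eq_or_ne i j with h | h <;> simp [Matrix.one_apply, h]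

theorem IsInt.mul {A B : Matrix m m K} (hA : IsInt (R := R) A) (hB : IsInt (R := R) B) :
    IsInt (R := R) (A * B) := by
  intro i j
  rw [Matrix.mul_apply]
  refine Valuation.map_sum_le _ fun k _ => ?_
  rw [Valuation.map_mul]
  exact mul_le_one' (hA i k) (hB k j)

theorem IsInt.mul_bound {A g : Matrix m m K} (hA : IsInt (R := R) A)
    {S : ValuationRing.ValueGroup R K} (hg : ∀ i j, vv (g i j) ≤ S) :
    ∀ i j, vv ((A * g) i j) ≤ S := by
  intro i j
  rw [Matrix.mul_apply]
  refine Valuation.map_sum_le _ fun k _ => ?_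
  rw [Valuation.map_mul]
  calc vv (A i k) * vv (g k j) ≤ 1 * S := mul_le_mul' (hA i k) (hg k j)
  _ = S := one_mul S

theorem IsInt.bound_mul {B g : Matrix m m K} (hB : IsInt (R := R) B)
    {S : ValuationRing.ValueGroup R K} (hg : ∀ i j, vv (g i j) ≤ S) :
    ∀ i j, vv ((g * B) i j) ≤ S := by
  intro i j
  rw [Matrix.mul_apply]
  refine Valuation.map_sum_le _ fun k _ => ?_
  rw [Valuation.map_mul]
  calc vv (g i k) * vv (B k j) ≤ S * 1 := mul_le_mul' (hg i k) (hB k j)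
  _ = S := mul_one S

end TrafoAux

namespace TrafoAux

variable {R : Type*} [CommRing R] [IsDomain R] [ValuationRing R]
  {K : Type*} [Field K] [Algebra R K] [IsFractionRing R K]

local notation "vv" => ValuationRing.valuation R K

theorem eq_zero_of_le_zero {x : K} (h : vv x ≤ 0) : x = 0 := by
  rw [le_zero_iff] at h
  exact (Valuation.zero_iff _).mp h

theorem sub_div_mul_cancel {x y : K} (h : vv x ≤ vv y) : x - x / y * y = 0 := by
  rcases eq_or_ne y 0 with hy | hy
  · subst hy
    have : x = 0 := by simpa using h
    simp [this]
  · rw [div_mul_cancel₀ _ hy, sub_self]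

theorem val_neg_div_le_one {x y : K} (h : vv x ≤ vv y) : vv (-(x / y)) ≤ 1 := by
  rw [Valuation.map_neg, Valuation.map_div]
  rcases eq_or_ne (vv y) 0 with hy | hy
  · have : x = 0 := eq_zero_of_le_zero (hy ▸ h)
    simp [this]
  · exact (div_le_one₀ (lt_of_le_of_ne (zero_le') (Ne.symm hy))).mpr h

end TrafoAux

namespace TrafoAux

variable {K : Type*} [Field K] {n : ℕ}

/-- extend a matrix by a corner entry and zero first row/column -/
def cext (a : K) (M : Matrix (Fin n) (Fin n) K) : Matrix (Fin (n + 1)) (Fin (n + 1)) K :=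
  Matrix.of (Fin.cons (Fin.cons a 0) fun i => Fin.cons 0 (M i))

@[simp] theorem cext_zero_zero (a : K) (M : Matrix (Fin n) (Fin n) K) : cext a M 0 0 = a := rfl
@[simp] theorem cext_zero_succ (a : K) (M : Matrix (Fin n) (Fin n) K) (j : Fin n) :
    cext a M 0 j.succ = 0 := rfl
@[simp] theorem cext_succ_zero (a : K) (M : Matrix (Fin n) (Fin n) K) (i : Fin n) :
    cext a M i.succ 0 = 0 := rfl
@[simp] theorem cext_succ_succ (a : K) (M : Matrix (Fin n) (Fin n) K) (i j : Fin n) :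
    cext a M i.succ j.succ = M i j := rfl

theorem cext_mul (a b : K) (M N : Matrix (Fin n) (Fin n) K) :
    cext a M * cext b N = cext (a * b) (M * N) := by
  ext i j
  refine Fin.cases ?_ (fun i => ?_) i <;> refine Fin.cases ?_ (fun j => ?_) j <;>
    simp [Matrix.mul_apply, Fin.sum_univ_succ]

theorem cext_one : cext 1 (1 : Matrix (Fin n) (Fin n) K) = 1 := by
  ext i j
  refine Fin.cases ?_ (fun i => ?_) i <;> refine Fin.cases ?_ (fun j => ?_) j <;>
    simp [Matrix.one_apply, Fin.succ_ne_zero, (Fin.succ_ne_zero _).symm, Fin.succ_inj]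

/-- unit extension -/
def cextU (u : (Matrix (Fin n) (Fin n) K)ˣ) : (Matrix (Fin (n + 1)) (Fin (n + 1)) K)ˣ where
  val := cext 1 u.val
  inv := cext 1 u.inv
  val_inv := by rw [cext_mul, one_mul, u.val_inv, cext_one]
  inv_val := by rw [cext_mul, one_mul, u.inv_val, cext_one]

end TrafoAux

namespace TrafoAux

variable {K : Type*} [Field K] {n : ℕ}

def lowN (c : Fin (n + 1) → K) : Matrix (Fin (n + 1)) (Fin (n + 1)) K :=
  Matrix.of fun i j => if j = 0 then c i else 0

def uppN (d : Fin (n + 1) → K) : Matrix (Fin (n + 1)) (Fin (n + 1)) K :=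
  Matrix.of fun i j => if i = 0 then d j else 0

theorem lowN_mul_lowN (c d : Fin (n + 1) → K) (hd : d 0 = 0) : lowN c * lowN d = 0 := by
  ext i j
  simp [lowN, Matrix.mul_apply, Finset.sum_ite_eq, hd]

theorem uppN_mul_uppN (c d : Fin (n + 1) → K) (hc : c 0 = 0) : uppN c * uppN d = 0 := by
  ext i j
  simp [uppN, Matrix.mul_apply, Finset.sum_ite_eq', hc]

theorem lowN_add_neg (c : Fin (n + 1) → K) : lowN c + lowN (-c) = 0 := by
  ext i j
  by_cases h : j = 0 <;> simp [lowN, h]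

theorem uppN_add_neg (d : Fin (n + 1) → K) : uppN d + uppN (-d) = 0 := by
  ext i j
  by_cases h : i = 0 <;> simp [uppN, h]

theorem one_add_mul_one_add (A B : Matrix (Fin (n + 1)) (Fin (n + 1)) K)
    (hs : A + B = 0) (hp : A * B = 0) : (1 + A) * (1 + B) = 1 := by
  have : (1 + A) * (1 + B) = 1 + (A + B) + A * B := by noncomm_ring
  rw [this, hs, hp, add_zero, add_zero]

theorem lowN_mul (c : Fin (n + 1) → K) (M : Matrix (Fin (n + 1)) (Fin (n + 1)) K) (i j) :
    (lowN c * M) i j = c i * M 0 j := by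
  simp [lowN, Matrix.mul_apply, Finset.sum_ite_eq]

theorem mul_uppN (d : Fin (n + 1) → K) (M : Matrix (Fin (n + 1)) (Fin (n + 1)) K) (i j) :
    (M * uppN d) i j = M i 0 * d j := by
  simp [uppN, Matrix.mul_apply, Finset.sum_ite_eq']

def lowU (c : Fin (n + 1) → K) (hc : c 0 = 0) : (Matrix (Fin (n + 1)) (Fin (n + 1)) K)ˣ where
  val := 1 + lowN c
  inv := 1 + lowN (-c)
  val_inv := one_add_mul_one_add _ _ (lowN_add_neg c) (lowN_mul_lowN c (-c) (by simp [hc]))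
  inv_val := one_add_mul_one_add _ _ (by rw [← lowN_add_neg (-c), neg_neg]) (lowN_mul_lowN (-c) c hc)

def uppU (d : Fin (n + 1) → K) (hd : d 0 = 0) : (Matrix (Fin (n + 1)) (Fin (n + 1)) K)ˣ where
  val := 1 + uppN d
  inv := 1 + uppN (-d)
  val_inv := one_add_mul_one_add _ _ (uppN_add_neg d) (uppN_mul_uppN d (-d) hd)
  inv_val := one_add_mul_one_add _ _ (by rw [← uppN_add_neg (-d), neg_neg]) (uppN_mul_uppN (-d) d (by simp [hd]))

theorem perm_auxL (σ : Equiv.Perm (Fin n)) :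
    ((1 : Matrix (Fin n) (Fin n) K).submatrix σ id) *
      ((1 : Matrix (Fin n) (Fin n) K).submatrix σ.symm id) = 1 := by
  ext i j
  rw [Matrix.mul_apply, Finset.sum_eq_single (σ i)]
  · simp [Matrix.one_apply]
  · intro x _ hx
    exact mul_eq_zero.mpr (Or.inl (Matrix.one_apply_ne (Ne.symm hx)))
  · simp

theorem perm_auxR (τ : Equiv.Perm (Fin n)) :
    ((1 : Matrix (Fin n) (Fin n) K).submatrix id τ) *
      ((1 : Matrix (Fin n) (Fin n) K).submatrix id τ.symm) = 1 := by
  ext i j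
  rw [Matrix.mul_apply, Finset.sum_eq_single (τ.symm i)]
  · simp [Matrix.one_apply]
  · intro x _ hx
    have h1 : i ≠ τ x := fun h => hx (by rw [h, Equiv.symm_apply_apply])
    exact mul_eq_zero.mpr (Or.inl (Matrix.one_apply_ne h1))
  · simp

/-- permutation units -/
def permL (σ : Equiv.Perm (Fin n)) : (Matrix (Fin n) (Fin n) K)ˣ where
  val := (1 : Matrix (Fin n) (Fin n) K).submatrix σ id
  inv := (1 : Matrix (Fin n) (Fin n) K).submatrix σ.symm id
  val_inv := perm_auxL σ
  inv_val := by simpa using perm_auxL σ.symm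

def permR (τ : Equiv.Perm (Fin n)) : (Matrix (Fin n) (Fin n) K)ˣ where
  val := (1 : Matrix (Fin n) (Fin n) K).submatrix id τ
  inv := (1 : Matrix (Fin n) (Fin n) K).submatrix id τ.symm
  val_inv := perm_auxR τ
  inv_val := by simpa using perm_auxR τ.symm

theorem permL_mul (σ : Equiv.Perm (Fin n)) (M : Matrix (Fin n) (Fin n) K) (i j : Fin n) :
    ((permL (K := K) σ).val * M) i j = M (σ i) j := by
  show (((1 : Matrix (Fin n) (Fin n) K).submatrix σ id) * M) i j = M (σ i) j
  rw [Matrix.mul_apply, Finset.sum_eq_single (σ i)]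
  · simp [Matrix.one_apply]
  · intro x _ hx
    exact mul_eq_zero.mpr (Or.inl (Matrix.one_apply_ne (Ne.symm hx)))
  · simp

theorem mul_permR (τ : Equiv.Perm (Fin n)) (M : Matrix (Fin n) (Fin n) K) (i j : Fin n) :
    (M * (permR (K := K) τ).val) i j = M i (τ j) := by
  show (M * ((1 : Matrix (Fin n) (Fin n) K).submatrix id τ)) i j = M i (τ j)
  rw [Matrix.mul_apply, Finset.sum_eq_single (τ j)]
  · simp [Matrix.one_apply]
  · intro x _ hx
    have h1 : x ≠ τ j := hx
    exact mul_eq_zero.mpr (Or.inr (Matrix.one_apply_ne h1))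
  · simp

end TrafoAux

namespace TrafoAux

variable {R : Type*} [CommRing R] [IsDomain R] [ValuationRing R]
  {K : Type*} [Field K] [Algebra R K] [IsFractionRing R K] {n : ℕ}

local notation "vv" => ValuationRing.valuation R K

theorem isInt_add {m : Type*} [Fintype m] {A B : Matrix m m K}
    (hA : IsInt (R := R) A) (hB : IsInt (R := R) B) : IsInt (R := R) (A + B) := fun i j => by
  rw [Matrix.add_apply]
  exact (ValuationRing.valuation R K).map_add_le (hA i j) (hB i j)

theorem isInt_lowN {c : Fin (n + 1) → K} (hc : ∀ i, vv (c i) ≤ 1) :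
    IsInt (R := R) (lowN c) := by
  intro i j
  by_cases hj : j = 0
  · simpa [lowN, hj] using hc i
  · simp [lowN, hj, zero_le']

theorem isInt_uppN {d : Fin (n + 1) → K} (hd : ∀ j, vv (d j) ≤ 1) :
    IsInt (R := R) (uppN d) := by
  intro i j
  by_cases hi : i = 0
  · simpa [uppN, hi] using hd j
  · simp [uppN, hi, zero_le']

theorem isInt_lowU_val {c : Fin (n + 1) → K} (hc : ∀ i, vv (c i) ≤ 1) (h0 : c 0 = 0) :
    IsInt (R := R) (lowU c h0).val :=
  isInt_add isInt_one (isInt_lowN hc)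

theorem isInt_lowU_inv {c : Fin (n + 1) → K} (hc : ∀ i, vv (c i) ≤ 1) (h0 : c 0 = 0) :
    IsInt (R := R) (lowU c h0).inv :=
  isInt_add isInt_one (isInt_lowN (by intro i; simpa using hc i))

theorem isInt_uppU_val {d : Fin (n + 1) → K} (hd : ∀ j, vv (d j) ≤ 1) (h0 : d 0 = 0) :
    IsInt (R := R) (uppU d h0).val :=
  isInt_add isInt_one (isInt_uppN hd)

theorem isInt_uppU_inv {d : Fin (n + 1) → K} (hd : ∀ j, vv (d j) ≤ 1) (h0 : d 0 = 0) :
    IsInt (R := R) (uppU d h0).inv :=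
  isInt_add isInt_one (isInt_uppN (by intro j; simpa using hd j))

theorem isInt_permL_val (σ : Equiv.Perm (Fin n)) : IsInt (R := R) (permL (K := K) σ).val :=
  fun i j => isInt_one (σ i) j

theorem isInt_permL_inv (σ : Equiv.Perm (Fin n)) : IsInt (R := R) (permL (K := K) σ).inv :=
  fun i j => isInt_one (σ.symm i) j

theorem isInt_permR_val (τ : Equiv.Perm (Fin n)) : IsInt (R := R) (permR (K := K) τ).val :=
  fun i j => isInt_one i (τ j)

theorem isInt_permR_inv (τ : Equiv.Perm (Fin n)) : IsInt (R := R) (permR (K := K) τ).inv :=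
  fun i j => isInt_one i (τ.symm j)

theorem isInt_cext {a : K} (ha : vv a ≤ 1) {M : Matrix (Fin n) (Fin n) K}
    (hM : IsInt (R := R) M) : IsInt (R := R) (cext a M) := by
  intro i j
  induction i using Fin.cases with
  | zero =>
    induction j using Fin.cases with
    | zero => simpa using ha
    | succ j' => simp [zero_le']
  | succ i' =>
    induction j using Fin.cases with
    | zero => simp [zero_le']
    | succ j' => simpa using hM i' j'

theorem isMonotoneDiag_cext {a : K} {D : Matrix (Fin n) (Fin n) K}
    (hD : Matrix.IsMonotoneDiag (R := R) D) (hle : ∀ i, vv (D i i) ≤ vv a) :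
    Matrix.IsMonotoneDiag (R := R) (cext a D) := by
  constructor
  · intro i j hij
    induction i using Fin.cases with
    | zero =>
      induction j using Fin.cases with
      | zero => exact absurd rfl hij
      | succ j' => simp
    | succ i' =>
      induction j using Fin.cases with
      | zero => simp
      | succ j' =>
        have : i' ≠ j' := fun hh => hij (by rw [hh])
        simpa using hD.1 this
  · intro i j hij
    induction j using Fin.cases with
    | zero =>
      have : i = 0 := Fin.le_zero_iff.mp hij
      subst this
      exact le_rfl
    | succ j' =>
      induction i using Fin.cases with
      | zero => simpa using hle j'
      | succ i' => simpa using hD.2 (Fin.succ_le_succ_iff.mp hij)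

end TrafoAux

namespace TrafoAux

variable {R : Type*} [CommRing R] [IsDomain R] [ValuationRing R]
  {K : Type*} [Field K] [Algebra R K] [IsFractionRing R K]

local notation "vv" => ValuationRing.valuation R K

theorem core : ∀ (n : ℕ) (g : Matrix (Fin n) (Fin n) K),
    ∃ u₁ u₂ : (Matrix (Fin n) (Fin n) K)ˣ,
      IsInt (R := R) u₁.val ∧ IsInt (R := R) u₁.inv ∧
      IsInt (R := R) u₂.val ∧ IsInt (R := R) u₂.inv ∧
      Matrix.IsMonotoneDiag (R := R) (u₁.val * g * u₂.val) := by
  intro n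
  induction n with
  | zero =>
    intro g
    refine ⟨1, 1, isInt_one, isInt_one, isInt_one, isInt_one, ?_, ?_⟩
    · intro i
      exact i.elim0
    · intro i
      exact i.elim0
  | succ n IH =>
    intro g
    obtain ⟨p, -, hp⟩ := Finset.exists_mem_eq_sup'
      (Finset.univ_nonempty : (Finset.univ : Finset (Fin (n+1) × Fin (n+1))).Nonempty)
      (fun p => vv (g p.1 p.2))
    have hmaxg : ∀ i j, vv (g i j) ≤ vv (g p.1 p.2) := fun i j =>
      le_trans (Finset.le_sup' (f := fun p : Fin (n+1) × Fin (n+1) => vv (g p.1 p.2)) (Finset.mem_univ (i, j))) hp.le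
    set σ := Equiv.swap (0 : Fin (n+1)) p.1 with hσdef
    set τ := Equiv.swap (0 : Fin (n+1)) p.2 with hτdef
    set g₁ := (permL (K := K) σ).val * g * (permR (K := K) τ).val with hg₁def
    have hg₁ : ∀ i j, g₁ i j = g (σ i) (τ j) := fun i j => by
      rw [hg₁def, mul_permR, permL_mul]
    have hmax : ∀ i j, vv (g₁ i j) ≤ vv (g₁ 0 0) := by
      intro i j
      rw [hg₁ i j, hg₁ 0 0, hσdef, hτdef, Equiv.swap_apply_left, Equiv.swap_apply_left]
      exact hmaxg _ _
    set a := g₁ 0 0 with hadef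
    set c : Fin (n+1) → K := fun i => if i = 0 then 0 else -(g₁ i 0 / a) with hcdef
    set d : Fin (n+1) → K := fun j => if j = 0 then 0 else -(g₁ 0 j / a) with hddef
    have hc0 : c 0 = 0 := if_pos rfl
    have hd0 : d 0 = 0 := if_pos rfl
    have hcint : ∀ i, vv (c i) ≤ 1 := by
      intro i
      by_cases hi : i = 0
      · simp [hcdef, hi]
      · rw [hcdef]
        simp only [if_neg hi]
        exact val_neg_div_le_one (hmax i 0)
    have hdint : ∀ j, vv (d j) ≤ 1 := by
      intro j
      by_cases hj : j = 0
      · simp [hddef, hj]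
      · rw [hddef]
        simp only [if_neg hj]
        exact val_neg_div_le_one (hmax 0 j)
    set L := lowU c hc0 with hLdef
    set U := uppU d hd0 with hUdef
    set h := L.val * g₁ * U.val with hhdef
    have hLg : ∀ i j, (L.val * g₁) i j = g₁ i j + c i * g₁ 0 j := by
      intro i j
      rw [hLdef]
      show ((1 + lowN c) * g₁) i j = _
      rw [Matrix.add_mul, Matrix.one_mul, Matrix.add_apply, lowN_mul]
    have hH : ∀ i j, h i j = (L.val * g₁) i j + (L.val * g₁) i 0 * d j := by
      intro i j
      rw [hhdef, hUdef]
      show ((L.val * g₁) * (1 + uppN d)) i j = _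
      rw [Matrix.mul_add, Matrix.mul_one, Matrix.add_apply, mul_uppN]
    have key : ∀ x y : K, vv x ≤ vv y → x + -(x / y) * y = 0 := by
      intro x y hxy
      rw [neg_mul, ← sub_eq_add_neg]
      exact sub_div_mul_cancel hxy
    have hcol : ∀ i, i ≠ 0 → (L.val * g₁) i 0 = 0 := by
      intro i hi
      rw [hLg, hcdef]
      simp only [if_neg hi]
      exact key _ _ (hmax i 0)
    have hLg0 : ∀ j, (L.val * g₁) 0 j = g₁ 0 j := by
      intro j
      rw [hLg, hc0, zero_mul, add_zero]
    have hrow : ∀ j, j ≠ 0 → h 0 j = 0 := by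
      intro j hj
      rw [hH, hLg0, hLg0, hddef]
      simp only [if_neg hj]
      rw [mul_comm]
      exact key _ _ (hmax 0 j)
    have hcol' : ∀ i, i ≠ 0 → h i 0 = 0 := by
      intro i hi
      rw [hH, hcol i hi, hd0, mul_zero, add_zero]
    have h00 : h 0 0 = a := by
      rw [hH, hLg0, hd0, mul_zero, add_zero, hadef]
    have hLint : IsInt (R := R) L.val := isInt_lowU_val hcint hc0
    have hUint : IsInt (R := R) U.val := isInt_uppU_val hdint hd0
    have hbound : ∀ i j, vv (h i j) ≤ vv a := by
      have h1 : ∀ i j, vv ((L.val * g₁) i j) ≤ vv a := IsInt.mul_bound hLint hmax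
      intro i j
      rw [hhdef]
      exact IsInt.bound_mul hUint h1 i j
    set h' : Matrix (Fin n) (Fin n) K := Matrix.of fun i j => h i.succ j.succ with h'def
    have hcext : h = cext a h' := by
      ext i j
      induction i using Fin.cases with
      | zero =>
        induction j using Fin.cases with
        | zero => rw [h00, cext_zero_zero]
        | succ j' => rw [hrow _ (Fin.succ_ne_zero j'), cext_zero_succ]
      | succ i' =>
        induction j using Fin.cases with
        | zero => rw [hcol' _ (Fin.succ_ne_zero i'), cext_succ_zero]
        | succ j' => rw [cext_succ_succ]; rfl
    obtain ⟨u₁', u₂', ha1, ha2, ha3, ha4, hmono⟩ := IH h'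
    have hDbound : ∀ i, vv ((u₁'.val * h' * u₂'.val) i i) ≤ vv a := by
      have b1 : ∀ i j, vv (h' i j) ≤ vv a := fun i j => hbound _ _
      have b2 := IsInt.mul_bound ha1 b1
      have b3 := IsInt.bound_mul ha3 b2
      exact fun i => b3 i i
    refine ⟨cextU u₁' * L * permL σ, permR τ * U * cextU u₂', ?_, ?_, ?_, ?_, ?_⟩
    · have e : (cextU u₁' * L * permL σ).val = (cextU u₁').val * L.val * (permL (K := K) σ).val :=
        by simp only [Units.val_mul]
      rw [e]
      exact ((isInt_cext (by simp) ha1).mul hLint).mul (isInt_permL_val σ)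
    · have e : (cextU u₁' * L * permL σ).inv = (permL (K := K) σ).inv * (L.inv * (cextU u₁').inv) :=
        rfl
      rw [e]
      exact (isInt_permL_inv σ).mul ((isInt_lowU_inv hcint hc0).mul (isInt_cext (by simp) ha2))
    · have e : (permR τ * U * cextU u₂').val = (permR (K := K) τ).val * U.val * (cextU u₂').val :=
        by simp only [Units.val_mul]
      rw [e]
      exact ((isInt_permR_val τ).mul (isInt_uppU_val hdint hd0)).mul (isInt_cext (by simp) ha3)
    · have e : (permR τ * U * cextU u₂').inv = (cextU u₂').inv * (U.inv * (permR (K := K) τ).inv) :=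
        rfl
      rw [e]
      exact (isInt_cext (by simp) ha4).mul ((isInt_uppU_inv hdint hd0).mul (isInt_permR_inv τ))
    · have heq : (cextU u₁' * L * permL σ).val * g * (permR τ * U * cextU u₂').val =
          cext 1 u₁'.val * h * cext 1 u₂'.val := by
        rw [hhdef, hg₁def]
        simp only [Units.val_mul]
        have e1 : (cextU u₁').val = cext 1 u₁'.val := rfl
        have e2 : (cextU u₂').val = cext 1 u₂'.val := rfl
        rw [e1, e2]
        simp only [mul_assoc]
      rw [heq, hcext, cext_mul, cext_mul, one_mul, mul_one]
      exact isMonotoneDiag_cext hmono hDbound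

end TrafoAux

namespace TrafoAux

variable {R : Type*} [CommRing R] [IsDomain R] [ValuationRing R]
  {K : Type*} [Field K] [Algebra R K] [IsFractionRing R K] {n : ℕ}

local notation "vv" => ValuationRing.valuation R K

theorem exists_lift {x : K} (hx : vv x ≤ 1) : ∃ r : R, algebraMap R K r = x :=
  (ValuationRing.mem_integer_iff R K x).mp ((Valuation.mem_integer_iff _ _).mpr hx)

theorem map_injective : Function.Injective
    (fun M : Matrix (Fin n) (Fin n) R => M.map (algebraMap R K)) := by
  intro M N h
  ext i j
  exact IsFractionRing.injective R K (congrFun (congrFun h i) j)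

theorem toGL (u : (Matrix (Fin n) (Fin n) K)ˣ) (h1 : IsInt (R := R) u.val)
    (h2 : IsInt (R := R) u.inv) :
    ∃ k : GL (Fin n) R,
      (Matrix.GeneralLinearGroup.map (n := Fin n) (algebraMap R K) k).val = u.val := by
  have hA : ∀ i j, ∃ r : R, algebraMap R K r = u.val i j := fun i j => exists_lift (h1 i j)
  have hB : ∀ i j, ∃ r : R, algebraMap R K r = u.inv i j := fun i j => exists_lift (h2 i j)
  choose A hA using hA
  choose B hB using hB
  have hAmap : (Matrix.of A).map (algebraMap R K) = u.val := by
    ext i j; exact hA i j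
  have hBmap : (Matrix.of B).map (algebraMap R K) = u.inv := by
    ext i j; exact hB i j
  have hAB : Matrix.of A * Matrix.of B = 1 := by
    apply map_injective (K := K)
    show (Matrix.of A * Matrix.of B).map (algebraMap R K) = (1 : Matrix (Fin n) (Fin n) R).map _
    rw [Matrix.map_mul, hAmap, hBmap, u.val_inv, Matrix.map_one _ (map_zero _) (map_one _)]
  have hBA : Matrix.of B * Matrix.of A = 1 := by
    apply map_injective (K := K)
    show (Matrix.of B * Matrix.of A).map (algebraMap R K) = (1 : Matrix (Fin n) (Fin n) R).map _
    rw [Matrix.map_mul, hAmap, hBmap, u.inv_val, Matrix.map_one _ (map_zero _) (map_one _)]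
  refine ⟨⟨Matrix.of A, Matrix.of B, hAB, hBA⟩, ?_⟩
  show (Matrix.of A).map (algebraMap R K) = u.val
  exact hAmap

end TrafoAux

/-- Let `R` be a valuation ring with fraction field `K` and valuation `v`.
For any `n × n` matrix `g` over `K` there are `k₁ k₂ ∈ GLₙ(R)` such that `k₁ * g * k₂` is
diagonal with diagonal entries of weakly decreasing valuation, and the supremum of the
valuations of the entries of `k₁ * g * k₂` equals that of `g`. -/
theorem exists_trafo_isMonotoneDiag {R : Type*} [CommRing R] [IsDomain R] [ValuationRing R]
    {K : Type*} [Field K] [Algebra R K] [IsFractionRing R K]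
    {n : ℕ} (g : Matrix (Fin n) (Fin n) K) :
    ∃ k₁ k₂ : GL (Fin n) R,
      Matrix.IsMonotoneDiag (R := R)
        (((Matrix.GeneralLinearGroup.map (n := Fin n) (algebraMap R K)) k₁).val * g *
          ((Matrix.GeneralLinearGroup.map (n := Fin n) (algebraMap R K)) k₂).val) ∧
      (∀ [Nonempty (Fin n)],
        Matrix.coeffsSup (R := R)
          (((Matrix.GeneralLinearGroup.map (n := Fin n) (algebraMap R K)) k₁).val * g *
            ((Matrix.GeneralLinearGroup.map (n := Fin n) (algebraMap R K)) k₂).val) =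
        Matrix.coeffsSup (R := R) g) := by
  classical
  obtain ⟨u₁, u₂, hi1, hi2, hi3, hi4, hmono⟩ := TrafoAux.core (R := R) (K := K) n g
  obtain ⟨k₁, hk₁⟩ := TrafoAux.toGL u₁ hi1 hi2
  obtain ⟨k₂, hk₂⟩ := TrafoAux.toGL u₂ hi3 hi4
  refine ⟨k₁, k₂, ?_, ?_⟩
  · rw [hk₁, hk₂]
    exact hmono
  intro _
  rw [hk₁, hk₂]
  have hsup : ∀ (M : Matrix (Fin n) (Fin n) K) (i j : Fin n),
      ValuationRing.valuation R K (M i j) ≤ Matrix.coeffsSup (R := R) M := fun M i j =>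
    Finset.le_sup' (f := fun p : Fin n × Fin n => ValuationRing.valuation R K (M p.1 p.2))
      (Finset.mem_univ (i, j))
  have hM : ∀ i j, ValuationRing.valuation R K ((u₁.val * g * u₂.val) i j) ≤
      Matrix.coeffsSup (R := R) g := fun i j =>
    TrafoAux.IsInt.bound_mul hi3 (TrafoAux.IsInt.mul_bound hi1 (hsup g)) i j
  have hrec : u₁.inv * (u₁.val * g * u₂.val) * u₂.inv = g := by
    rw [show u₁.val * g * u₂.val = u₁.val * (g * u₂.val) from mul_assoc _ _ _,
      ← mul_assoc u₁.inv, u₁.inv_val, one_mul, mul_assoc, u₂.val_inv, mul_one]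
  have hMb : ∀ i j, ValuationRing.valuation R K (g i j) ≤
      Matrix.coeffsSup (R := R) (u₁.val * g * u₂.val) := by
    intro i j
    have := TrafoAux.IsInt.bound_mul hi4
      (TrafoAux.IsInt.mul_bound hi2 (hsup (u₁.val * g * u₂.val))) i j
    rwa [hrec] at this
  apply le_antisymm
  · exact Finset.sup'_le _ _ fun p _ => hM p.1 p.2
  · exact Finset.sup'_le _ _ fun p _ => hMb p.1 p.2
end

section
/- Let R be a valuation ring with fraction field K. Then GL_n(K) = GL_n(R) · T(K) · GL_n(R), i.e. every invertible n×n matrix over K can be written as k₁·t·k₂ with k₁, k₂ ∈ GL_n(R) and t ∈ T(K) a diagonal invertible matrix. -/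
/-!
Divisibility over a valuation ring `R` is total on `K`, so among the entries of a matrix over `K`
there is a pivot dividing all the others over `R`. Permuting it into the corner and clearing its
row and column by elementary operations with coefficients in `R` splits off a `1 × 1` block, and
induction on the size makes `P * g * Q` diagonal with `P`, `Q` invertible over `R`.
-/

open Matrix

universe u

namespace Matrix

variable {ι κ m o R K : Type*} [CommRing R] [CommRing K] [Algebra R K]

variable (R) in
def IsEquivalentToDiagonal [Fintype ι] [DecidableEq ι] (M : Matrix ι ι K) : Prop :=
  ∃ P Q : Matrix ι ι R, IsUnit P ∧ IsUnit Q ∧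
    (P.map (algebraMap R K) * M * Q.map (algebraMap R K)).IsDiag

section
variable [Fintype ι] [DecidableEq ι]

theorem IsDiag.isEquivalentToDiagonal {M : Matrix ι ι K} (hM : M.IsDiag) :
    IsEquivalentToDiagonal R M :=
  ⟨1, 1, isUnit_one, isUnit_one, by simpa [Matrix.map_one] using hM⟩

theorem IsEquivalentToDiagonal.of_map_mul_mul {M : Matrix ι ι K} {P Q : Matrix ι ι R}
    (hP : IsUnit P) (hQ : IsUnit Q)
    (h : IsEquivalentToDiagonal R (P.map (algebraMap R K) * M * Q.map (algebraMap R K))) :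
    IsEquivalentToDiagonal R M := by
  obtain ⟨P', Q', hP', hQ', hd⟩ := h
  refine ⟨P' * P, Q * Q', hP'.mul hP, hQ.mul hQ', ?_⟩
  simpa only [Matrix.map_mul, Matrix.mul_assoc] using hd

theorem IsEquivalentToDiagonal.submatrix [Fintype κ] [DecidableEq κ] {M : Matrix ι ι K}
    (h : IsEquivalentToDiagonal R M) (e₁ e₂ : κ ≃ ι) :
    IsEquivalentToDiagonal R (M.submatrix e₁ e₂) := by
  obtain ⟨P, Q, hP, hQ, hd⟩ := h
  refine ⟨P.submatrix e₁ e₁, Q.submatrix e₂ e₁, (isUnit_submatrix_equiv e₁ e₁).2 hP,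
    (isUnit_submatrix_equiv e₂ e₁).2 hQ, ?_⟩
  rw [← submatrix_map, ← submatrix_map, submatrix_mul_equiv, submatrix_mul_equiv]
  exact hd.submatrix e₁.injective

end

section
variable [Fintype m] [DecidableEq m] [Fintype o] [DecidableEq o]

theorem IsEquivalentToDiagonal.fromBlocks {A : Matrix m m K} {D : Matrix o o K}
    (hA : IsEquivalentToDiagonal R A) (hD : IsEquivalentToDiagonal R D) :
    IsEquivalentToDiagonal R (fromBlocks A 0 0 D) := by
  obtain ⟨P, Q, hP, hQ, hdA⟩ := hA
  obtain ⟨P', Q', hP', hQ', hdD⟩ := hD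
  refine ⟨.fromBlocks P 0 0 P', .fromBlocks Q 0 0 Q',
    isUnit_fromBlocks_zero₂₁.2 ⟨hP, hP'⟩, isUnit_fromBlocks_zero₂₁.2 ⟨hQ, hQ'⟩, ?_⟩
  simpa [fromBlocks_map, fromBlocks_multiply] using hdA.fromBlocks hdD

theorem IsEquivalentToDiagonal.fromBlocks_of_schur {A : Matrix m m K} {D : Matrix o o K}
    (X : Matrix m o R) (Y : Matrix o m R)
    (h : IsEquivalentToDiagonal R
      (.fromBlocks (A - X.map (algebraMap R K) * D * Y.map (algebraMap R K)) 0 0 D)) :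
    IsEquivalentToDiagonal R
      (.fromBlocks A (X.map (algebraMap R K) * D) (D * Y.map (algebraMap R K)) D) := by
  refine .of_map_mul_mul (P := .fromBlocks 1 (-X) 0 1) (Q := .fromBlocks 1 0 (-Y) 1)
    (isUnit_fromBlocks_zero₂₁.2 ⟨isUnit_one, isUnit_one⟩)
    (isUnit_fromBlocks_zero₁₂.2 ⟨isUnit_one, isUnit_one⟩) ?_
  convert h using 1
  simp [fromBlocks_map, fromBlocks_multiply, Matrix.mul_assoc,
    Matrix.map_neg _ (map_neg (algebraMap R K)), ← sub_eq_add_neg]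

theorem isEquivalentToDiagonal_of_corner_dvd {M : Matrix (m ⊕ Unit) (m ⊕ Unit) K}
    (hcol : ∀ i, ∃ r : R, r • M (.inr ()) (.inr ()) = M (.inl i) (.inr ()))
    (hrow : ∀ j, ∃ r : R, r • M (.inr ()) (.inr ()) = M (.inr ()) (.inl j))
    (hA : ∀ A : Matrix m m K, IsEquivalentToDiagonal R A) :
    IsEquivalentToDiagonal R M := by
  choose c hc using hcol
  choose d hd using hrow
  have hB :
      M.toBlocks₁₂ = (of fun i (_ : Unit) => c i).map (algebraMap R K) * M.toBlocks₂₂ := by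
    ext i j
    simp [toBlocks₁₂, toBlocks₂₂, mul_apply, ← hc, Algebra.smul_def]
  have hC :
      M.toBlocks₂₁ = M.toBlocks₂₂ * (of fun (_ : Unit) j => d j).map (algebraMap R K) := by
    ext i j
    simp [toBlocks₂₁, toBlocks₂₂, mul_apply, ← hd, Algebra.smul_def, mul_comm]
  rw [← M.fromBlocks_toBlocks, hB, hC]
  exact .fromBlocks_of_schur _ _ <|
    .fromBlocks (hA _) (isDiag_of_subsingleton _).isEquivalentToDiagonal

end

end Matrix

namespace ValuationRing

variable {R K : Type*} [CommRing R] [IsDomain R] [ValuationRing R] [Field K] [Algebra R K]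
  [IsFractionRing R K]

-- The order on the value group is divisibility by `R`, by definition.
theorem exists_smul_eq_of_valuation_le {a b : K} (h : valuation R K a ≤ valuation R K b) :
    ∃ r : R, r • b = a :=
  h

theorem exists_forall_exists_smul_eq {α : Type*} [Fintype α] [Nonempty α] (x : α → K) :
    ∃ a, ∀ b, ∃ r : R, r • x a = x b := by
  obtain ⟨a, -, ha⟩ := Finset.univ.exists_max_image (valuation R K ∘ x) Finset.univ_nonempty
  exact ⟨a, fun b => exists_smul_eq_of_valuation_le (ha b (Finset.mem_univ b))⟩

theorem isEquivalentToDiagonal {ι : Type u} [Fintype ι] [DecidableEq ι] (M : Matrix ι ι K) :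
    IsEquivalentToDiagonal R M := by
  induction h : Fintype.card ι generalizing ι with
  | zero =>
    have := Fintype.card_eq_zero_iff.mp h
    exact (isDiag_of_subsingleton M).isEquivalentToDiagonal
  | succ n ih =>
    have : Nonempty ι := Fintype.card_pos_iff.mp (by omega)
    obtain ⟨⟨i₀, j₀⟩, hpivot⟩ :=
      exists_forall_exists_smul_eq (R := R) fun p : ι × ι => M p.1 p.2
    obtain ⟨e⟩ : Nonempty (ι ≃ ULift.{u} (Fin n) ⊕ Unit) :=
      Fintype.card_eq.mp (by simp [h])
    let e₁ := e.trans (Equiv.swap (e i₀) (.inr ()))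
    let e₂ := e.trans (Equiv.swap (e j₀) (.inr ()))
    have h₁ : e₁.symm (.inr ()) = i₀ := e₁.symm_apply_eq.mpr (by simp [e₁])
    have h₂ : e₂.symm (.inr ()) = j₀ := e₂.symm_apply_eq.mpr (by simp [e₂])
    have hN : IsEquivalentToDiagonal R (M.submatrix e₁.symm e₂.symm) :=
      isEquivalentToDiagonal_of_corner_dvd
        (fun i => by simpa [h₁, h₂] using hpivot (e₁.symm (.inl i), j₀))
        (fun j => by simpa [h₁, h₂] using hpivot (i₀, e₂.symm (.inl j)))
        fun A => ih A (by simp)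
    simpa using hN.submatrix e₁ e₂

end ValuationRing

/-- Let `R` be a valuation ring with fraction field `K`. Then
`GLₙ(K) = GLₙ(R) ⬝ T(K) ⬝ GLₙ(R)`: every `g ∈ GLₙ(K)` can be written as `k₁ * t * k₂` with
`k₁, k₂ ∈ GLₙ(R)` and `t ∈ GLₙ(K)` an invertible diagonal matrix. -/
theorem GL_eq_GLR_mul_diagonal_mul_GLR {R : Type*} [CommRing R] [IsDomain R] [ValuationRing R]
    {K : Type*} [Field K] [Algebra R K] [IsFractionRing R K]
    {n : ℕ} (g : GL (Fin n) K) :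
    ∃ (k₁ k₂ : GL (Fin n) R) (t : GL (Fin n) K), (t : Matrix (Fin n) (Fin n) K).IsDiag ∧
      g = (Matrix.GeneralLinearGroup.map (n := Fin n) (algebraMap R K)) k₁ * t *
        (Matrix.GeneralLinearGroup.map (n := Fin n) (algebraMap R K)) k₂ := by
  obtain ⟨P, Q, hP, hQ, hd⟩ :=
    ValuationRing.isEquivalentToDiagonal (R := R) (g : Matrix (Fin n) (Fin n) K)
  refine ⟨hP.unit⁻¹, hQ.unit⁻¹, GeneralLinearGroup.map (algebraMap R K) hP.unit * g *
    GeneralLinearGroup.map (algebraMap R K) hQ.unit, hd, ?_⟩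
  simp only [map_inv]
  group
end

section
/- Cartan decomposition, existence: let R be a discrete valuation ring with uniformiser ϖ and fraction field K. For every g ∈ GL_n(K) there exist k₁, k₂ ∈ GL_n(R) and an antitone function f : Fin n → ℤ (i.e. f₁ ≥ f₂ ≥ … ≥ fₙ) such that k₁·g·k₂ equals the diagonal matrix diag(ϖ^{f 0}, …, ϖ^{f (n-1)}). -/
/-!
Clearing denominators writes `g = ϖ⁻ᴺ • A` with `A` a matrix over `R`. Divisibility in a valuation
ring is total, so some entry of `A` divides all the others; moved to a corner by permutations, it
clears its row and column by unipotent block matrices, and induction makes `A` equivalent over `R`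
to a diagonal matrix. Its entries are units times powers of `ϖ`: the units and a permutation sorting
the exponents are absorbed into `k₁` and `k₂`, and dividing by `ϖ ^ N` shifts the exponents into `ℤ`.
-/

open Matrix

/-- The diagonal matrix over `K` with `i`-th diagonal entry `ϖ ^ f i`, for `f : Fin n → ℤ`. -/
noncomputable def cartanDiag {R : Type*} [CommRing R] {K : Type*} [Field K] [Algebra R K]
    (ϖ : R) {n : ℕ} (f : Fin n → ℤ) : Matrix (Fin n) (Fin n) K :=
  Matrix.diagonal fun i => (algebraMap R K ϖ) ^ (f i)

theorem PreValuationRing.exists_dvd_forall {R α : Type*} [CommRing R] [Nontrivial R]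
    [PreValuationRing R] [Finite α] [Nonempty α] (f : α → R) : ∃ a, ∀ b, f a ∣ f b := by
  classical
  obtain ⟨a, ha⟩ := Finite.exists_max fun b => Ideal.span {f b}
  exact ⟨a, fun b => Ideal.span_singleton_le_span_singleton.mp (ha b)⟩

namespace Matrix

variable {ι κ R : Type*} [Fintype ι] [DecidableEq ι] [Fintype κ] [DecidableEq κ] [CommRing R]

def Equivalent (A B : Matrix ι ι R) : Prop :=
  ∃ P Q : GL ι R, (P : Matrix ι ι R) * A * Q = B

namespace Equivalent

theorem of_isUnit {A B P Q : Matrix ι ι R} (hP : IsUnit P) (hQ : IsUnit Q) (h : P * A * Q = B) :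
    A.Equivalent B :=
  ⟨hP.unit, hQ.unit, h⟩

theorem refl (A : Matrix ι ι R) : A.Equivalent A :=
  ⟨1, 1, by simp⟩

theorem trans {A B C : Matrix ι ι R} (hAB : A.Equivalent B) (hBC : B.Equivalent C) :
    A.Equivalent C := by
  obtain ⟨P, Q, rfl⟩ := hAB
  obtain ⟨P', Q', rfl⟩ := hBC
  exact ⟨P' * P, Q * Q', by simp only [Units.val_mul, Matrix.mul_assoc]⟩

theorem det_ne_zero [IsDomain R] {A B : Matrix ι ι R} (h : A.Equivalent B) (hA : A.det ≠ 0) :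
    B.det ≠ 0 := by
  obtain ⟨P, Q, rfl⟩ := h
  rw [det_mul, det_mul]
  exact mul_ne_zero (mul_ne_zero (P.isUnit.map detMonoidHom).ne_zero hA)
    (Q.isUnit.map detMonoidHom).ne_zero

theorem reindex {A B : Matrix ι ι R} (h : A.Equivalent B) (e : ι ≃ κ) :
    (Matrix.reindex e e A).Equivalent (Matrix.reindex e e B) := by
  obtain ⟨P, Q, rfl⟩ := h
  refine of_isUnit (P := Matrix.reindex e e P) (Q := Matrix.reindex e e Q) ?_ ?_ ?_
  · simp [isUnit_iff_isUnit_det]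
  · simp [isUnit_iff_isUnit_det]
  · simp [reindex_apply]

theorem fromBlocks_zero {A A' : Matrix ι ι R} (h : A.Equivalent A') (D : Matrix κ κ R) :
    (fromBlocks A 0 0 D).Equivalent (fromBlocks A' 0 0 D) := by
  obtain ⟨P, Q, rfl⟩ := h
  refine of_isUnit (P := fromBlocks (P : Matrix ι ι R) 0 0 1)
    (Q := fromBlocks (Q : Matrix ι ι R) 0 0 1) ?_ ?_ ?_
  · simp [isUnit_iff_isUnit_det]
  · simp [isUnit_iff_isUnit_det]
  · simp [fromBlocks_multiply]

end Equivalent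

theorem equivalent_submatrix (A : Matrix ι ι R) (σ τ : Equiv.Perm ι) :
    A.Equivalent (A.submatrix σ τ) := by
  have isUnit_permMatrix (π : Equiv.Perm ι) : IsUnit (π.permMatrix R) := by
    rw [isUnit_iff_isUnit_det, det_permutation]
    exact (Equiv.Perm.sign π).isUnit.map (Int.castRingHom R)
  refine .of_isUnit (isUnit_permMatrix σ) (isUnit_permMatrix τ.symm) ?_
  simp only [Equiv.Perm.permMatrix, PEquiv.toMatrix_toPEquiv_mul, PEquiv.mul_toMatrix_toPEquiv,
    submatrix_submatrix, Equiv.symm_symm]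
  rfl

theorem equivalent_diagonal_comp (d : ι → R) (σ : Equiv.Perm ι) :
    (diagonal d).Equivalent (diagonal (d ∘ σ)) := by
  rw [← submatrix_diagonal_equiv]
  exact equivalent_submatrix _ σ σ

theorem equivalent_diagonal_units_mul (u : ι → Rˣ) (d : ι → R) :
    (diagonal fun i => (u i : R) * d i).Equivalent (diagonal d) := by
  refine .of_isUnit (isUnit_diagonal.mpr (Pi.isUnit_iff.mpr fun i => (u i)⁻¹.isUnit)) isUnit_one ?_
  simp [diagonal_mul_diagonal]

theorem equivalent_fromBlocks_of_eq_mul (A : Matrix ι ι R) {B X : Matrix ι κ R}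
    {C Y : Matrix κ ι R} {D : Matrix κ κ R} (hB : B = X * D) (hC : C = D * Y) :
    (fromBlocks A B C D).Equivalent (fromBlocks (A - X * D * Y) 0 0 D) := by
  refine .of_isUnit (P := fromBlocks 1 (-X) 0 1) (Q := fromBlocks 1 0 (-Y) 1) ?_ ?_ ?_
  · simp [isUnit_iff_isUnit_det]
  · simp [isUnit_iff_isUnit_det]
  · subst hB hC
    simp [fromBlocks_multiply, Matrix.mul_assoc, sub_eq_add_neg]

theorem exists_equivalent_fromBlocks_of_dvd (M : Matrix (ι ⊕ Fin 1) (ι ⊕ Fin 1) R)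
    (hcol : ∀ i, M (.inr 0) (.inr 0) ∣ M (.inl i) (.inr 0))
    (hrow : ∀ j, M (.inr 0) (.inr 0) ∣ M (.inr 0) (.inl j)) :
    ∃ S, M.Equivalent (fromBlocks S 0 0 (diagonal fun _ => M (.inr 0) (.inr 0))) := by
  choose x hx using hcol
  choose y hy using hrow
  have hD : M.toBlocks₂₂ = diagonal fun _ => M (.inr 0) (.inr 0) := by
    ext a b
    rw [Subsingleton.elim a 0, Subsingleton.elim b 0]
    simp [toBlocks₂₂]
  rw [← fromBlocks_toBlocks M, hD]
  refine ⟨_, equivalent_fromBlocks_of_eq_mul _ (X := of fun i _ => x i) (Y := of fun _ j => y j)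
    ?_ ?_⟩
  · ext i a
    rw [Subsingleton.elim a 0]
    simp [toBlocks₁₂, hx, mul_comm]
  · ext a j
    rw [Subsingleton.elim a 0]
    simp [toBlocks₂₁, hy]

theorem exists_equivalent_diagonal [Nontrivial R] [PreValuationRing R] {n : ℕ}
    (A : Matrix (Fin n) (Fin n) R) : ∃ d, A.Equivalent (diagonal d) := by
  induction n with
  | zero => exact ⟨0, by convert Equivalent.refl A; ext i; exact i.elim0⟩
  | succ n ih =>
    obtain ⟨⟨i₀, j₀⟩, hpivot⟩ :=
      PreValuationRing.exists_dvd_forall fun x : Fin (n + 1) × Fin (n + 1) => A x.1 x.2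
    set e : Fin n ⊕ Fin 1 ≃ Fin (n + 1) := finSumFinEquiv
    set σ := Equiv.swap i₀ (e (.inr 0))
    set τ := Equiv.swap j₀ (e (.inr 0))
    have hσ : σ (e (.inr 0)) = i₀ := Equiv.swap_apply_right _ _
    have hτ : τ (e (.inr 0)) = j₀ := Equiv.swap_apply_right _ _
    set M := Matrix.reindex e.symm e.symm (A.submatrix σ τ)
    obtain ⟨S, hS⟩ := exists_equivalent_fromBlocks_of_dvd M
      (fun i => by simpa [M, hσ, hτ] using hpivot (σ (e (.inl i)), j₀))
      (fun j => by simpa [M, hσ, hτ] using hpivot (i₀, τ (e (.inl j))))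
    obtain ⟨d, hd⟩ := ih S
    have hM : M.Equivalent (diagonal (Sum.elim d fun _ => M (.inr 0) (.inr 0))) := by
      rw [← fromBlocks_diagonal]
      exact hS.trans (hd.fromBlocks_zero _)
    refine ⟨(Sum.elim d fun _ => M (.inr 0) (.inr 0)) ∘ e.symm,
      (equivalent_submatrix A σ τ).trans ?_⟩
    simpa [M, reindex_apply, submatrix_diagonal_equiv, Function.comp_assoc] using hM.reindex e

section DiscreteValuationRing

variable [IsDomain R] [IsDiscreteValuationRing R] {ϖ : R}

theorem exists_antitone_equivalent_diagonal_pow (hϖ : Irreducible ϖ) {n : ℕ}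
    (A : Matrix (Fin n) (Fin n) R) (hA : A.det ≠ 0) :
    ∃ m : Fin n → ℕ, Antitone m ∧ A.Equivalent (diagonal fun i => ϖ ^ m i) := by
  obtain ⟨d, hd⟩ := exists_equivalent_diagonal A
  have hd0 : ∀ i, d i ≠ 0 := by
    simpa [det_diagonal, Finset.prod_ne_zero_iff] using hd.det_ne_zero hA
  choose m u hmu using fun i => IsDiscreteValuationRing.eq_unit_mul_pow_irreducible (hd0 i) hϖ
  let σ := Tuple.sort (OrderDual.toDual ∘ m)
  refine ⟨m ∘ σ, monotone_toDual_comp_iff.mp (Tuple.monotone_sort _), hd.trans ?_⟩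
  rw [show d = fun i => (u i : R) * ϖ ^ m i from funext hmu]
  exact (equivalent_diagonal_units_mul u _).trans (equivalent_diagonal_comp _ σ)

variable {K : Type*} [Field K] [Algebra R K] [IsFractionRing R K]

theorem exists_map_eq_pow_smul (hϖ : Irreducible ϖ) {m n : Type*} [Finite m] [Finite n]
    (g : Matrix m n K) :
    ∃ (N : ℕ) (A : Matrix m n R), A.map (algebraMap R K) = algebraMap R K ϖ ^ N • g := by
  obtain ⟨⟨b, hb⟩, hint⟩ := IsLocalization.exist_integer_multiples_of_finite (nonZeroDivisors R)
    fun ij : m × n => g ij.1 ij.2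
  obtain ⟨N, u, rfl⟩ := IsDiscreteValuationRing.eq_unit_mul_pow_irreducible
    (nonZeroDivisors.ne_zero hb) hϖ
  choose a ha using hint
  refine ⟨N, of fun i j => ↑u⁻¹ * a (i, j), ?_⟩
  ext i j
  rw [Matrix.map_apply, of_apply, map_mul, ha, Algebra.smul_def, map_mul, map_pow, ← mul_assoc,
    ← mul_assoc, ← map_mul, Units.inv_mul, map_one, one_mul, Matrix.smul_apply, smul_eq_mul]

end DiscreteValuationRing

end Matrix

theorem pow_smul_cartanDiag_sub {R K : Type*} [CommRing R] [Field K] [Algebra R K] {ϖ : R}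
    (hϖ : algebraMap R K ϖ ≠ 0) {n : ℕ} (m : Fin n → ℕ) (N : ℕ) :
    algebraMap R K ϖ ^ N • cartanDiag ϖ (fun i => (m i : ℤ) - N) =
      (diagonal fun i => ϖ ^ m i).map (algebraMap R K) := by
  rw [cartanDiag, ← diagonal_smul, diagonal_map (map_zero _)]
  congr 1
  ext i
  rw [Pi.smul_apply, zpow_sub₀ hϖ, zpow_natCast, zpow_natCast, map_pow, smul_eq_mul,
    mul_div_cancel₀ _ (pow_ne_zero _ hϖ)]

/-- **Cartan decomposition, existence.** Let `R` be a discrete valuation ring with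
uniformiser `ϖ` and fraction field `K`. For every `g ∈ GLₙ(K)` there exist `k₁, k₂ ∈ GLₙ(R)`
and an antitone `f : Fin n → ℤ` with `k₁ * g * k₂ = diag (ϖ ^ f 0, …, ϖ ^ f (n - 1))`. -/
theorem cartan_decomposition_exists {R : Type*} [CommRing R] [IsDomain R]
    [IsDiscreteValuationRing R] {K : Type*} [Field K] [Algebra R K] [IsFractionRing R K]
    (ϖ : R) (hϖ : Irreducible ϖ) {n : ℕ} (g : GL (Fin n) K) :
    ∃ (k₁ k₂ : GL (Fin n) R) (f : Fin n → ℤ), Antitone f ∧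
      (((Matrix.GeneralLinearGroup.map (n := Fin n) (algebraMap R K)) k₁ * g *
        (Matrix.GeneralLinearGroup.map (n := Fin n) (algebraMap R K)) k₂ :
          GL (Fin n) K) : Matrix (Fin n) (Fin n) K) = cartanDiag ϖ f := by
  have hϖK : algebraMap R K ϖ ≠ 0 :=
    (map_ne_zero_iff _ (IsFractionRing.injective R K)).mpr hϖ.ne_zero
  obtain ⟨N, A, hA⟩ := exists_map_eq_pow_smul hϖ (g : Matrix (Fin n) (Fin n) K)
  have hdetA : A.det ≠ 0 := by
    have : algebraMap R K A.det ≠ 0 := by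
      rw [RingHom.map_det, RingHom.mapMatrix_apply, hA, det_smul]
      exact mul_ne_zero (pow_ne_zero _ (pow_ne_zero _ hϖK)) (g.isUnit.map detMonoidHom).ne_zero
    exact fun h => this (by rw [h, map_zero])
  obtain ⟨m, hm, P, Q, hPQ⟩ := exists_antitone_equivalent_diagonal_pow hϖ A hdetA
  refine ⟨P, Q, fun i => m i - N, fun i j hij => by simpa using hm hij, ?_⟩
  apply smul_right_injective _ (pow_ne_zero N hϖK)
  dsimp only
  rw [pow_smul_cartanDiag_sub hϖK, ← hPQ]
  simp [Matrix.map_mul, hA]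
end

section
/- Cartan decomposition, uniqueness: let R be a discrete valuation ring with uniformiser ϖ and fraction field K. If k₁, k₂, k₁', k₂' ∈ GL_n(R) and f, f' : Fin n → ℤ are antitone functions such that k₁·diag(ϖ^f)·k₂ = k₁'·diag(ϖ^{f'})·k₂' in GL_n(K), then f = f'. -/
/-!
Multiplying both sides by a common power of `ϖ` makes all exponents natural numbers, so the
identity takes place over `R`. If `diag(ϖ^a) = X * diag(ϖ^b) * Y` over `R`, the Cauchy–Binet
expansion shows that every `k × k` minor of the left side is divisible by `ϖ^m`, where `m` is the
smallest sum of `k` of the exponents `b i`; for antitone `b` this is the sum over the last `k`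
indices. The principal minor of `diag(ϖ^a)` on those indices then gives `∑ b ≤ ∑ a` over every
tail of indices, the symmetric relation gives the reverse inequality, and tail sums determine
`a = b`.
-/

open Matrix

open Finset

theorem Finset.sum_le_sum_of_isUpperSet {ι M : Type*} [LinearOrder ι] [AddCommMonoid M]
    [PartialOrder M] [IsOrderedAddMonoid M] {a : ι → M} (ha : Antitone a) {s t : Finset ι}
    (ht : IsUpperSet (t : Set ι)) (hst : s.card = t.card) :
    ∑ x ∈ t, a x ≤ ∑ x ∈ s, a x := by
  classical
  rw [← sum_sdiff (inter_subset_left : t ∩ s ⊆ t), ← sum_sdiff (inter_subset_right : t ∩ s ⊆ s),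
    sdiff_inter_self_left, sdiff_inter_self_right]
  gcongr ?_ + _
  have hcard : (t \ s).card = (s \ t).card := card_sdiff_comm hst.symm
  rcases (t \ s).eq_empty_or_nonempty with hts | hts
  · rw [hts, card_empty, eq_comm, card_eq_zero] at hcard
    rw [hts, hcard]
  -- `p` separates the two differences: `a ≤ a p` on `t \ s`, and `a p ≤ a` on `s \ t` because `t`
  -- is an upper set.
  set p := (t \ s).min' hts
  have hp : p ∈ t := (mem_sdiff.mp ((t \ s).min'_mem hts)).1
  calc ∑ x ∈ t \ s, a x ≤ (t \ s).card • a p :=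
        sum_le_card_nsmul _ _ _ fun x hx => ha ((t \ s).min'_le x hx)
    _ = (s \ t).card • a p := by rw [hcard]
    _ ≤ ∑ y ∈ s \ t, a y := card_nsmul_le_sum _ _ _ fun y hy => ha <| le_of_not_gt fun hpy =>
        (mem_sdiff.mp hy).2 (ht hpy.le hp)

theorem eq_of_forall_isUpperSet_sum_eq {ι M : Type*} [LinearOrder ι] [LocallyFiniteOrderTop ι]
    [AddCancelCommMonoid M] {a b : ι → M}
    (h : ∀ t : Finset ι, IsUpperSet (t : Set ι) → ∑ x ∈ t, a x = ∑ x ∈ t, b x) : a = b := by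
  funext i
  have hIci := h (Ici i) (by simpa using isUpperSet_Ici i)
  rw [← add_sum_Ioi_eq_sum_Ici, ← add_sum_Ioi_eq_sum_Ici,
    h (Ioi i) (by simpa using isUpperSet_Ioi i)] at hIci
  exact add_right_cancel hIci

namespace Matrix

variable {R : Type*} [CommRing R] {l m n : Type*}

def DvdMinors (κ : Type*) [Fintype κ] [DecidableEq κ] (d : R) (M : Matrix m n R) : Prop :=
  ∀ (r : κ → m) (c : κ → n), d ∣ (M.submatrix r c).det

variable {κ : Type*} [Fintype κ] [DecidableEq κ]

theorem det_mul_eq_sum_prod_mul_det_submatrix [Fintype m] (P : Matrix κ m R)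
    (Q : Matrix m κ R) :
    (P * Q).det = ∑ p : κ → m, (∏ i, P i (p i)) * (Q.submatrix p id).det := by
  have hrows : P * Q = of fun i => ∑ t, P i t • Q t := by
    ext i j
    simp [mul_apply, Finset.sum_apply]
  calc (P * Q).det = detRowAlternating.toMultilinearMap fun i => ∑ t, P i t • Q t := by
        rw [hrows]; rfl
    _ = _ := by
        rw [MultilinearMap.map_sum]
        refine sum_congr rfl fun p _ => ?_
        rw [MultilinearMap.map_smul_univ]
        rfl

theorem DvdMinors.mul_left {d : R} [Fintype m] (M : Matrix l m R) {N : Matrix m n R}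
    (hN : DvdMinors κ d N) : DvdMinors κ d (M * N) := by
  intro r c
  rw [submatrix_mul M N r id c Function.bijective_id, det_mul_eq_sum_prod_mul_det_submatrix]
  exact dvd_sum fun p _ => (hN p c).mul_left _

theorem DvdMinors.transpose {d : R} {M : Matrix m n R} (hM : DvdMinors κ d M) :
    DvdMinors κ d Mᵀ := fun r c => by
  rw [← transpose_submatrix, det_transpose]
  exact hM c r

theorem DvdMinors.mul_right {d : R} [Fintype m] {M : Matrix l m R} (hM : DvdMinors κ d M)
    (N : Matrix m n R) : DvdMinors κ d (M * N) := by
  simpa using (hM.transpose.mul_left Nᵀ).transpose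

theorem dvdMinors_diagonal_pow [DecidableEq n] (ϖ : R) {b : n → ℕ} {e : ℕ}
    (he : ∀ s : Finset n, s.card = Fintype.card κ → e ≤ ∑ x ∈ s, b x) :
    DvdMinors κ (ϖ ^ e) (diagonal fun i => ϖ ^ b i) := by
  intro r c
  by_cases hc : Function.Injective c
  · rw [det_apply']
    refine dvd_sum fun σ _ => ?_
    by_cases hσ : ∀ i, r (σ i) = c i
    · have hsum : ∑ i, b (c i) = ∑ x ∈ univ.map ⟨c, hc⟩, b x := (sum_map univ ⟨c, hc⟩ b).symm
      simp only [submatrix_apply, hσ, diagonal_apply_eq, prod_pow_eq_pow_sum, hsum]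
      exact (pow_dvd_pow ϖ (he _ (by simp))).mul_left _
    · push Not at hσ
      obtain ⟨i, hi⟩ := hσ
      rw [prod_eq_zero (mem_univ i) (by simp [diagonal_apply_ne _ hi]), mul_zero]
      exact dvd_zero _
  · obtain ⟨i, j, hij, hne⟩ := Function.not_injective_iff.mp hc
    rw [det_zero_of_column_eq hne fun k => by simp [hij]]
    exact dvd_zero _

end Matrix

section DiagonalPow

variable {R : Type*} [CommRing R] [IsDomain R] {ι : Type*} [Fintype ι] [DecidableEq ι]
  [LinearOrder ι] {ϖ : R}

theorem sum_le_sum_of_diagonal_pow_eq_mul_mul (h0 : ϖ ≠ 0) (hu : ¬IsUnit ϖ) {a b : ι → ℕ}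
    (hb : Antitone b) {X Y : Matrix ι ι R}
    (E : diagonal (fun i => ϖ ^ a i) = X * diagonal (fun i => ϖ ^ b i) * Y) {t : Finset ι}
    (ht : IsUpperSet (t : Set ι)) :
    ∑ x ∈ t, b x ≤ ∑ x ∈ t, a x := by
  have hminors : DvdMinors t (ϖ ^ ∑ x ∈ t, b x) (diagonal fun i => ϖ ^ a i) := by
    rw [E]
    refine ((dvdMinors_diagonal_pow ϖ fun s hs => ?_).mul_left X).mul_right Y
    exact sum_le_sum_of_isUpperSet hb ht (by simpa using hs)
  have hprincipal := hminors Subtype.val Subtype.val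
  rw [submatrix_diagonal _ _ Subtype.val_injective, det_diagonal, Function.comp_def,
    prod_pow_eq_pow_sum, sum_coe_sort t a] at hprincipal
  exact (pow_dvd_pow_iff h0 hu).mp hprincipal

theorem eq_of_mul_diagonal_pow_mul_eq [LocallyFiniteOrderTop ι] (h0 : ϖ ≠ 0) (hu : ¬IsUnit ϖ)
    {a b : ι → ℕ} (ha : Antitone a) (hb : Antitone b) {k₁ k₂ k₁' k₂' : GL ι R}
    (h : (k₁ : Matrix ι ι R) * diagonal (fun i => ϖ ^ a i) * k₂ =
      k₁' * diagonal (fun i => ϖ ^ b i) * k₂') :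
    a = b := by
  have isolate : ∀ {u v u' v' : GL ι R} {x y : Matrix ι ι R},
      (u : Matrix ι ι R) * x * v = u' * y * v' →
      x = (u⁻¹ * u' : GL ι R) * y * (v' * v⁻¹ : GL ι R) := by
    intro u v u' v' x y huv
    calc x = (u⁻¹ : GL ι R) * (u * x * v) * (v⁻¹ : GL ι R) := by simp [Matrix.mul_assoc]
      _ = _ := by rw [huv]; simp [Matrix.mul_assoc]
  exact eq_of_forall_isUpperSet_sum_eq fun t ht =>
    le_antisymm (sum_le_sum_of_diagonal_pow_eq_mul_mul h0 hu ha (isolate h.symm) ht)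
      (sum_le_sum_of_diagonal_pow_eq_mul_mul h0 hu hb (isolate h) ht)

end DiagonalPow

section CartanDiag

variable {R K : Type*} [CommRing R] [Field K] [Algebra R K] {n : ℕ}

theorem cartanDiag_intCast_add {ϖ : R} (hϖ : algebraMap R K ϖ ≠ 0) (c : ℤ) (a : Fin n → ℕ) :
    cartanDiag ϖ (fun i => c + a i) =
      algebraMap R K ϖ ^ c • (diagonal fun i => ϖ ^ a i).map (algebraMap R K) := by
  ext i j
  rcases eq_or_ne i j with rfl | hij
  · simp [cartanDiag, zpow_add₀ hϖ]
  · simp [cartanDiag, hij]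

theorem mul_diagonal_pow_mul_eq_of_mul_cartanDiag_mul_eq [IsFractionRing R K] {ϖ : R}
    (hϖ : ϖ ≠ 0) {c : ℤ} {a b : Fin n → ℕ} {k₁ k₂ k₁' k₂' : GL (Fin n) R}
    (h : (GeneralLinearGroup.map (algebraMap R K) k₁ : Matrix (Fin n) (Fin n) K) *
          cartanDiag ϖ (fun i => c + a i) *
          (GeneralLinearGroup.map (algebraMap R K) k₂ : Matrix (Fin n) (Fin n) K) =
        (GeneralLinearGroup.map (algebraMap R K) k₁' : Matrix (Fin n) (Fin n) K) *
          cartanDiag ϖ (fun i => c + b i) *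
          (GeneralLinearGroup.map (algebraMap R K) k₂' : Matrix (Fin n) (Fin n) K)) :
    (k₁ : Matrix (Fin n) (Fin n) R) * diagonal (fun i => ϖ ^ a i) * k₂ =
      k₁' * diagonal (fun i => ϖ ^ b i) * k₂' := by
  have hinj := IsFractionRing.injective R K
  have hπ : algebraMap R K ϖ ≠ 0 := (map_ne_zero_iff _ hinj).mpr hϖ
  simp only [cartanDiag_intCast_add hπ, GeneralLinearGroup.val_map_apply, Matrix.mul_smul,
    Matrix.smul_mul, ← Matrix.map_mul] at h
  exact map_injective hinj (smul_right_injective _ (zpow_ne_zero c hπ) h)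

end CartanDiag

theorem cartan_decomposition_unique_general {R : Type*} [CommRing R] [IsDomain R]
    {K : Type*} [Field K] [Algebra R K] [IsFractionRing R K]
    (ϖ : R) (hϖ : Irreducible ϖ) {n : ℕ}
    {k₁ k₂ k₁' k₂' : GL (Fin n) R} {f f' : Fin n → ℤ}
    (hf : Antitone f) (hf' : Antitone f')
    (h : (((Matrix.GeneralLinearGroup.map (n := Fin n) (algebraMap R K)) k₁ :
            Matrix (Fin n) (Fin n) K)) * cartanDiag ϖ f *
          ((Matrix.GeneralLinearGroup.map (n := Fin n) (algebraMap R K)) k₂ :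
            Matrix (Fin n) (Fin n) K) =
        (((Matrix.GeneralLinearGroup.map (n := Fin n) (algebraMap R K)) k₁' :
            Matrix (Fin n) (Fin n) K)) * cartanDiag ϖ f' *
          ((Matrix.GeneralLinearGroup.map (n := Fin n) (algebraMap R K)) k₂' :
            Matrix (Fin n) (Fin n) K)) :
    f = f' := by
  obtain ⟨c, hc⟩ := Finite.exists_ge fun i => min (f i) (f' i)
  obtain ⟨a, rfl⟩ : ∃ a : Fin n → ℕ, f = fun i => c + a i :=
    ⟨fun i => (f i - c).toNat, funext fun i => by have := hc i; dsimp only; omega⟩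
  obtain ⟨b, rfl⟩ : ∃ b : Fin n → ℕ, f' = fun i => c + b i :=
    ⟨fun i => (f' i - c).toNat, funext fun i => by have := hc i; dsimp only; omega⟩
  have ha : Antitone a := fun i j hij => by simpa using hf hij
  have hb : Antitone b := fun i j hij => by simpa using hf' hij
  have hR := mul_diagonal_pow_mul_eq_of_mul_cartanDiag_mul_eq hϖ.ne_zero h
  rw [eq_of_mul_diagonal_pow_mul_eq hϖ.ne_zero hϖ.not_isUnit ha hb hR]

/-- **Cartan decomposition, uniqueness.** Let `R` be a discrete valuation ring with
uniformiser `ϖ` and fraction field `K`. If `k₁, k₂, k₁', k₂' ∈ GLₙ(R)` and `f, f' : Fin n → ℤ`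
are antitone with `k₁ * diag (ϖ ^ f) * k₂ = k₁' * diag (ϖ ^ f') * k₂'` in `GLₙ(K)`,
then `f = f'`. -/
theorem cartan_decomposition_unique {R : Type*} [CommRing R] [IsDomain R]
    [IsDiscreteValuationRing R] {K : Type*} [Field K] [Algebra R K] [IsFractionRing R K]
    (ϖ : R) (hϖ : Irreducible ϖ) {n : ℕ}
    {k₁ k₂ k₁' k₂' : GL (Fin n) R} {f f' : Fin n → ℤ}
    (hf : Antitone f) (hf' : Antitone f')
    (h : (((Matrix.GeneralLinearGroup.map (n := Fin n) (algebraMap R K)) k₁ :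
            Matrix (Fin n) (Fin n) K)) * cartanDiag ϖ f *
          ((Matrix.GeneralLinearGroup.map (n := Fin n) (algebraMap R K)) k₂ :
            Matrix (Fin n) (Fin n) K) =
        (((Matrix.GeneralLinearGroup.map (n := Fin n) (algebraMap R K)) k₁' :
            Matrix (Fin n) (Fin n) K)) * cartanDiag ϖ f' *
          ((Matrix.GeneralLinearGroup.map (n := Fin n) (algebraMap R K)) k₂' :
            Matrix (Fin n) (Fin n) K)) :
    f = f' :=
  cartan_decomposition_unique_general ϖ hϖ hf hf' h
end

section
/- If the tuple of exponents in the Cartan decomposition is computed with respect to two different uniformisers, it is the same: let R be a discrete valuation ring with fraction field K, let ϖ and ϖ' be two uniformisers of R, and let f, f' : Fin n → ℤ be antitone functions such that k₁·diag(ϖ^f)·k₂ = k₁'·diag(ϖ'^{f'})·k₂' in GL_n(K) for some k₁, k₂, k₁', k₂' ∈ GL_n(R). Then f = f'. -/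
/-! The `R`-submodule of `K` spanned by the `j × j` minors of a matrix is invariant under
multiplication on either side by `GLₙ(R)`. For `diag(ϖ ^ f)` with `f` antitone it is
`R ∙ ϖ ^ m`, where `m` is the smallest sum of `j` of the exponents, namely the sum of the last `j`
values of `f`. Associated uniformisers give the same submodule, and `R ∙ ϖ ^ a = R ∙ ϖ ^ b`
forces `a = b`; so `f` and `f'` have the same tail sums, hence coincide. -/

open Matrix

open Finset

namespace Matrix

variable {R K : Type*} [CommRing R] [CommRing K] [Algebra R K] {l m n : Type*} (j : ℕ)

variable (R) in
noncomputable def minorSpan (A : Matrix m n K) : Submodule R K :=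
  Submodule.span R (Set.range fun st : (Fin j → m) × (Fin j → n) => (A.submatrix st.1 st.2).det)

lemma det_submatrix_mem_minorSpan (A : Matrix m n K) (s : Fin j → m) (t : Fin j → n) :
    (A.submatrix s t).det ∈ minorSpan R j A :=
  Submodule.subset_span ⟨(s, t), rfl⟩

-- Multilinearity of the determinant in the rows of `B * A`: a weak form of Cauchy–Binet.
lemma minorSpan_map_mul_le [Fintype m] (B : Matrix l m R) (A : Matrix m n K) :
    minorSpan R j (B.map (algebraMap R K) * A) ≤ minorSpan R j A := by
  refine Submodule.span_le.2 ?_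
  rintro _ ⟨⟨s, t⟩, rfl⟩
  dsimp only
  have hrows : (B.map (algebraMap R K) * A).submatrix s t =
      fun k => ∑ i, B (s k) i • fun l => A i (t l) := by
    ext k l
    simp [mul_apply, Finset.sum_apply, Algebra.smul_def]
  have hdet : ((B.map (algebraMap R K) * A).submatrix s t).det =
      ∑ u : Fin j → m, (∏ k, B (s k) (u k)) • (A.submatrix u t).det := by
    rw [hrows]
    change detRowAlternating.toMultilinearMap _ = _
    rw [MultilinearMap.map_sum]
    refine Finset.sum_congr rfl fun u _ => ?_
    exact (detRowAlternating.toMultilinearMap.restrictScalars R).map_smul_univ _ _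
  rw [SetLike.mem_coe, hdet]
  exact Submodule.sum_mem _ fun u _ => Submodule.smul_mem _ _ (det_submatrix_mem_minorSpan j A u t)

lemma minorSpan_transpose_le (A : Matrix m n K) : minorSpan R j Aᵀ ≤ minorSpan R j A := by
  refine Submodule.span_le.2 ?_
  rintro _ ⟨⟨s, t⟩, rfl⟩
  dsimp only
  rw [SetLike.mem_coe, ← transpose_submatrix, det_transpose]
  exact det_submatrix_mem_minorSpan j A t s

lemma minorSpan_transpose (A : Matrix m n K) : minorSpan R j Aᵀ = minorSpan R j A :=
  le_antisymm (minorSpan_transpose_le j A) (by simpa using minorSpan_transpose_le j Aᵀ)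

lemma minorSpan_mul_map_le [Fintype n] (A : Matrix m n K) (B : Matrix n l R) :
    minorSpan R j (A * B.map (algebraMap R K)) ≤ minorSpan R j A := by
  rw [← minorSpan_transpose, ← minorSpan_transpose j A, transpose_mul, ← transpose_map]
  exact minorSpan_map_mul_le j Bᵀ Aᵀ

lemma minorSpan_GL_mul [Fintype m] [DecidableEq m] (g : GL m R) (A : Matrix m n K) :
    minorSpan R j ((GeneralLinearGroup.map (algebraMap R K) g : Matrix m m K) * A) =
      minorSpan R j A := by
  refine le_antisymm (minorSpan_map_mul_le j _ A) ?_
  calc minorSpan R j A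
      = minorSpan R j ((GeneralLinearGroup.map (algebraMap R K) g⁻¹ : Matrix m m K) *
          ((GeneralLinearGroup.map (algebraMap R K) g : Matrix m m K) * A)) := by
        rw [← Matrix.mul_assoc, ← Units.val_mul, ← map_mul, inv_mul_cancel, map_one, Units.val_one,
          Matrix.one_mul]
    _ ≤ _ := minorSpan_map_mul_le j _ _

lemma minorSpan_mul_GL [Fintype n] [DecidableEq n] (A : Matrix m n K) (g : GL n R) :
    minorSpan R j (A * (GeneralLinearGroup.map (algebraMap R K) g : Matrix n n K)) =
      minorSpan R j A := by
  refine le_antisymm (minorSpan_mul_map_le j A _) ?_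
  calc minorSpan R j A
      = minorSpan R j (A * (GeneralLinearGroup.map (algebraMap R K) g : Matrix n n K) *
          (GeneralLinearGroup.map (algebraMap R K) g⁻¹ : Matrix n n K)) := by
        rw [Matrix.mul_assoc, ← Units.val_mul, ← map_mul, mul_inv_cancel, map_one, Units.val_one,
          Matrix.mul_one]
    _ ≤ _ := minorSpan_mul_map_le j _ _

lemma minorSpan_diagonal [Fintype n] [DecidableEq n] (d : n → K) :
    minorSpan R j (diagonal d) = Submodule.span R ((fun T => ∏ i ∈ T, d i) '' {T | #T = j}) := by
  refine le_antisymm (Submodule.span_le.2 ?_) (Submodule.span_le.2 ?_)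
  · rintro _ ⟨⟨s, t⟩, rfl⟩
    dsimp only
    by_cases hs : Function.Injective s
    · have hprod : ∏ k, d (s k) ∈ Submodule.span R ((fun T => ∏ i ∈ T, d i) '' {T | #T = j}) :=
        Submodule.subset_span ⟨univ.map ⟨s, hs⟩, by simp, by simp⟩
      rw [SetLike.mem_coe, det_apply]
      refine Submodule.sum_mem _ fun σ _ => ?_
      rw [Units.smul_def]
      refine zsmul_mem ?_ _
      by_cases hst : ∀ k, s (σ k) = t k
      · simp_rw [submatrix_apply, ← hst, diagonal_apply_eq]
        rwa [Equiv.prod_comp σ fun k => d (s k)]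
      · push Not at hst
        obtain ⟨k, hk⟩ := hst
        rw [Finset.prod_eq_zero (mem_univ k) (by simp [diagonal_apply_ne _ hk])]
        exact zero_mem _
    · obtain ⟨a, b, hab, hne⟩ := Function.not_injective_iff.1 hs
      rw [det_zero_of_row_eq hne (by ext; simp [hab])]
      exact zero_mem _
  · rintro _ ⟨T, hT, rfl⟩
    dsimp only
    let s : Fin j → n := fun k => (T.equivFinOfCardEq hT).symm k
    have hs : Function.Injective s :=
      Subtype.val_injective.comp (T.equivFinOfCardEq hT).symm.injective
    have hdet : ((diagonal d).submatrix s s).det = ∏ i ∈ T, d i := by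
      rw [submatrix_diagonal _ _ hs, det_diagonal, ← prod_coe_sort T]
      exact Equiv.prod_comp (T.equivFinOfCardEq hT).symm fun i : T => d i
    rw [SetLike.mem_coe, ← hdet]
    exact det_submatrix_mem_minorSpan j _ s s

end Matrix

section TailSum

variable {M : Type*} {n : ℕ}

def tailSum [AddCommMonoid M] (f : Fin n → M) (i : ℕ) : M :=
  ∑ k ∈ univ.filter (fun k : Fin n => i ≤ (k : ℕ)), f k

lemma Fin.card_filter_le_val (n i : ℕ) : #(univ.filter fun k : Fin n => i ≤ (k : ℕ)) = n - i := by
  rw [← card_map Fin.valEmbedding, ← Nat.card_Ico i n]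
  congr 1
  ext k
  simp only [mem_map, mem_filter, mem_univ, true_and, Fin.valEmbedding_apply, mem_Ico]
  exact ⟨by rintro ⟨k, hk, rfl⟩; exact ⟨hk, k.is_lt⟩, fun hk => ⟨⟨k, hk.2⟩, hk.1, rfl⟩⟩

lemma tailSum_eq_add_tailSum_succ [AddCommMonoid M] (f : Fin n → M) (i : Fin n) :
    tailSum f i = f i + tailSum f (i + 1) := by
  have hinsert : univ.filter (fun k : Fin n => (i : ℕ) ≤ k) =
      insert i (univ.filter fun k : Fin n => (i : ℕ) + 1 ≤ k) := by
    ext k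
    simp only [mem_filter, mem_univ, true_and, mem_insert, Fin.ext_iff]
    omega
  rw [tailSum, hinsert, sum_insert (by simp), tailSum]

lemma eq_of_tailSum_eq [AddCancelCommMonoid M] {f g : Fin n → M}
    (h : ∀ i ≤ n, tailSum f i = tailSum g i) : f = g := by
  funext i
  have hi := h i i.is_lt.le
  rw [tailSum_eq_add_tailSum_succ, tailSum_eq_add_tailSum_succ, h (i + 1) i.is_lt] at hi
  exact add_right_cancel hi

variable [AddCommMonoid M] [LinearOrder M]

lemma Finset.sum_le_sum_of_card_eq [IsOrderedAddMonoid M] {ι : Type*} {s t : Finset ι}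
    {f : ι → M} (hst : #s = #t) (h : ∀ a ∈ s, ∀ b ∈ t, f a ≤ f b) :
    ∑ i ∈ s, f i ≤ ∑ i ∈ t, f i := by
  obtain rfl | hs := s.eq_empty_or_nonempty
  · simp [card_eq_zero.1 hst.symm]
  obtain ⟨a, ha, hmax⟩ := s.exists_max_image f hs
  calc ∑ i ∈ s, f i ≤ #s • f a := sum_le_card_nsmul _ _ _ hmax
    _ = #t • f a := by rw [hst]
    _ ≤ ∑ i ∈ t, f i := card_nsmul_le_sum _ _ _ fun b hb => h a ha b hb

variable [IsOrderedCancelAddMonoid M] {f : Fin n → M}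

lemma Antitone.tailSum_le_sum (hf : Antitone f) (T : Finset (Fin n)) :
    tailSum f (n - #T) ≤ ∑ i ∈ T, f i := by
  set L := univ.filter fun k : Fin n => n - #T ≤ (k : ℕ)
  have hL : #L = #T := by
    have hT : #T ≤ n := by simpa using card_le_univ T
    rw [Fin.card_filter_le_val]
    omega
  rw [tailSum, ← sum_inter_add_sum_sdiff L T, ← sum_inter_add_sum_sdiff T L, inter_comm]
  refine add_le_add le_rfl (sum_le_sum_of_card_eq (card_sdiff_comm hL) fun a ha b hb => hf ?_)
  simp only [L, mem_sdiff, mem_filter, mem_univ, true_and] at ha hb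
  exact Fin.le_def.2 (by omega)

lemma Antitone.isLeast_tailSum (hf : Antitone f) {j : ℕ} (hj : j ≤ n) :
    IsLeast ((fun T => ∑ i ∈ T, f i) '' {T | #T = j}) (tailSum f (n - j)) := by
  refine ⟨⟨univ.filter fun k : Fin n => n - j ≤ (k : ℕ), ?_, rfl⟩, ?_⟩
  · rw [Set.mem_ofPred_eq, Fin.card_filter_le_val]
    omega
  · rintro _ ⟨T, rfl, rfl⟩
    exact hf.tailSum_le_sum T

end TailSum

lemma zpow_sum₀ {ι G₀ : Type*} [CommGroupWithZero G₀] {x : G₀} (hx : x ≠ 0) (s : Finset ι)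
    (f : ι → ℤ) : x ^ (∑ i ∈ s, f i) = ∏ i ∈ s, x ^ f i := by
  classical
  induction s using Finset.induction_on with
  | empty => simp
  | insert i s hi ih => rw [sum_insert hi, prod_insert hi, zpow_add₀ hx, ih]

section Uniformiser

variable {R K : Type*} [CommRing R] [Field K] [Algebra R K] {ϖ : R}

lemma algebraMap_units_zpow (u : Rˣ) (m : ℤ) :
    algebraMap R K ↑(u ^ m) = algebraMap R K ↑u ^ m := by
  change ((Units.map (algebraMap R K : R →* K) (u ^ m) : Kˣ) : K) = _
  rw [map_zpow, Units.val_zpow_eq_zpow_val]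
  rfl

lemma span_singleton_algebraMap_zpow_eq_of_associated {ϖ' : R} (h : Associated ϖ ϖ') (m : ℤ) :
    Submodule.span R {algebraMap R K ϖ' ^ m} = Submodule.span R {algebraMap R K ϖ ^ m} := by
  obtain ⟨u, rfl⟩ := h
  rw [map_mul, mul_zpow, ← algebraMap_units_zpow, mul_comm, ← Algebra.smul_def,
    Submodule.span_singleton_smul_eq (Units.isUnit _)]

lemma algebraMap_zpow_eq_pow_smul (hϖ : algebraMap R K ϖ ≠ 0) {a b : ℤ} (hab : b ≤ a) :
    algebraMap R K ϖ ^ a = ϖ ^ (a - b).toNat • algebraMap R K ϖ ^ b := by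
  rw [Algebra.smul_def, map_pow, ← zpow_natCast, Int.toNat_of_nonneg (sub_nonneg.2 hab),
    ← zpow_add₀ hϖ, sub_add_cancel]

variable [FaithfulSMul R K]

lemma algebraMap_ne_zero_of_irreducible (hϖ : Irreducible ϖ) : algebraMap R K ϖ ≠ 0 :=
  (map_ne_zero_iff _ (FaithfulSMul.algebraMap_injective R K)).2 hϖ.ne_zero

lemma algebraMap_zpow_mem_span_singleton_zpow_iff (hϖ : Irreducible ϖ) {a b : ℤ} :
    algebraMap R K ϖ ^ a ∈ Submodule.span R {algebraMap R K ϖ ^ b} ↔ b ≤ a := by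
  have hx := algebraMap_ne_zero_of_irreducible (K := K) hϖ
  refine ⟨fun h => ?_, fun hab =>
    Submodule.mem_span_singleton.2 ⟨_, (algebraMap_zpow_eq_pow_smul hx hab).symm⟩⟩
  obtain ⟨r, hr⟩ := Submodule.mem_span_singleton.1 h
  by_contra! hab
  rw [algebraMap_zpow_eq_pow_smul hx hab.le, smul_smul, Algebra.smul_def] at hr
  have hunit : r * ϖ ^ (b - a).toNat = 1 := FaithfulSMul.algebraMap_injective R K <| by
    rw [map_one]
    exact (mul_eq_right₀ (zpow_ne_zero a hx)).1 hr
  exact hϖ.not_isUnit ((isUnit_pow_iff (by omega)).1 (IsUnit.of_mul_eq_one_right _ hunit))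

lemma span_singleton_algebraMap_zpow_inj (hϖ : Irreducible ϖ) {a b : ℤ} :
    Submodule.span R {algebraMap R K ϖ ^ a} = Submodule.span R {algebraMap R K ϖ ^ b} ↔ a = b := by
  refine ⟨fun h => le_antisymm ?_ ?_, by rintro rfl; rfl⟩
  · rw [← algebraMap_zpow_mem_span_singleton_zpow_iff (K := K) hϖ, h]
    exact Submodule.mem_span_singleton_self _
  · rw [← algebraMap_zpow_mem_span_singleton_zpow_iff (K := K) hϖ, ← h]
    exact Submodule.mem_span_singleton_self _

lemma span_algebraMap_zpow_image_eq (hϖ : Irreducible ϖ) {E : Set ℤ} {m : ℤ} (hm : IsLeast E m) :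
    Submodule.span R ((algebraMap R K ϖ ^ ·) '' E) = Submodule.span R {algebraMap R K ϖ ^ m} := by
  refine le_antisymm (Submodule.span_le.2 ?_)
    (Submodule.span_mono (Set.singleton_subset_iff.2 ⟨m, hm.1, rfl⟩))
  rintro _ ⟨e, he, rfl⟩
  exact (algebraMap_zpow_mem_span_singleton_zpow_iff hϖ).2 (hm.2 he)

lemma minorSpan_cartanDiag (hϖ : Irreducible ϖ) {n : ℕ} {f : Fin n → ℤ} (hf : Antitone f)
    {j : ℕ} (hj : j ≤ n) :
    minorSpan R j (cartanDiag (K := K) ϖ f) =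
      Submodule.span R {algebraMap R K ϖ ^ tailSum f (n - j)} := by
  rw [cartanDiag, minorSpan_diagonal, ← span_algebraMap_zpow_image_eq hϖ (hf.isLeast_tailSum hj),
    Set.image_image]
  congr 1
  exact Set.image_congr fun T _ => (zpow_sum₀ (algebraMap_ne_zero_of_irreducible hϖ) _ _).symm

end Uniformiser

/-- The tuple of exponents in the Cartan decomposition does not depend on the
choice of uniformiser: if `ϖ, ϖ'` are uniformisers of a discrete valuation ring `R` with
fraction field `K`, `f, f' : Fin n → ℤ` are antitone, and
`k₁ * diag (ϖ ^ f) * k₂ = k₁' * diag (ϖ' ^ f') * k₂'` in `GLₙ(K)` for some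
`k₁, k₂, k₁', k₂' ∈ GLₙ(R)`, then `f = f'`. -/
theorem cartan_decomposition_uniformiser_independent {R : Type*} [CommRing R] [IsDomain R]
    [IsDiscreteValuationRing R] {K : Type*} [Field K] [Algebra R K] [IsFractionRing R K]
    (ϖ ϖ' : R) (hϖ : Irreducible ϖ) (hϖ' : Irreducible ϖ') {n : ℕ}
    {k₁ k₂ k₁' k₂' : GL (Fin n) R} {f f' : Fin n → ℤ}
    (hf : Antitone f) (hf' : Antitone f')
    (h : (((Matrix.GeneralLinearGroup.map (n := Fin n) (algebraMap R K)) k₁ :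
            Matrix (Fin n) (Fin n) K)) * cartanDiag ϖ f *
          ((Matrix.GeneralLinearGroup.map (n := Fin n) (algebraMap R K)) k₂ :
            Matrix (Fin n) (Fin n) K) =
        (((Matrix.GeneralLinearGroup.map (n := Fin n) (algebraMap R K)) k₁' :
            Matrix (Fin n) (Fin n) K)) * cartanDiag ϖ' f' *
          ((Matrix.GeneralLinearGroup.map (n := Fin n) (algebraMap R K)) k₂' :
            Matrix (Fin n) (Fin n) K)) :
    f = f' := by
  have hassoc := IsDiscreteValuationRing.associated_of_irreducible R hϖ hϖ'
  refine eq_of_tailSum_eq fun i hi => ?_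
  obtain ⟨j, hj, rfl⟩ : ∃ j ≤ n, i = n - j := ⟨n - i, Nat.sub_le n i, (Nat.sub_sub_self hi).symm⟩
  rw [← span_singleton_algebraMap_zpow_inj (K := K) hϖ,
    ← span_singleton_algebraMap_zpow_eq_of_associated hassoc (tailSum f' (n - j)),
    ← minorSpan_cartanDiag hϖ hf hj, ← minorSpan_cartanDiag hϖ' hf' hj,
    ← minorSpan_GL_mul j k₁, ← minorSpan_mul_GL j _ k₂, h, minorSpan_mul_GL, minorSpan_GL_mul]
end

section
/- Let R be a discrete valuation ring with uniformiser ϖ and fraction field K, and let M and L be R-lattices in K². Then there exist an R-basis (e₀, e₁) of M (indexed by Fin 2) and an antitone function f : Fin 2 → ℤ such that (ϖ^{f 0}·e₀, ϖ^{f 1}·e₁) is an R-basis of L. -/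
/-!
Scale `L` by a power `ϖ ^ k` until it lies in `M`. Over the principal ideal domain `R`,
the Smith normal form of `ϖ ^ k • L ⊆ M` gives bases with `ϖ ^ k • e'ᵢ = aᵢ • eᵢ`.
Writing `aᵢ = uᵢ ϖ ^ mᵢ` with `uᵢ` a unit and absorbing `uᵢ` into `eᵢ` gives
`e'ᵢ = ϖ ^ (mᵢ - k) • eᵢ`; finally permute the index so that the exponents decrease.
-/

open Module Submodule Pointwise nonZeroDivisors

/-- An `R`-lattice in `K²`: an `R`-submodule of `K²` that is finitely generated over `R`
and spans `K²` as a `K`-vector space. -/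
structure BTLattice (R : Type*) [CommRing R] (K : Type*) [Field K] [Algebra R K] where
  /-- the underlying submodule -/
  toSubmodule : Submodule R (Fin 2 → K)
  fg : toSubmodule.FG
  spans : Submodule.span K (toSubmodule : Set (Fin 2 → K)) = ⊤

theorem Tuple.exists_perm_antitone_comp {n : ℕ} {α : Type*} [LinearOrder α] (g : Fin n → α) :
    ∃ σ : Equiv.Perm (Fin n), Antitone (g ∘ σ) :=
  ⟨Tuple.sort (OrderDual.toDual ∘ g), monotone_toDual_comp_iff.mp (Tuple.monotone_sort _)⟩

section PID

variable {R V ι : Type*} [CommRing R] [IsDomain R] [IsPrincipalIdealRing R]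
  [AddCommGroup V] [Module R V] [Module.IsTorsionFree R V] [Finite ι]

theorem Submodule.exists_basis_smul_eq_smul_of_smul_le {M N : Submodule R V}
    (bM : Basis ι R M) (bN : Basis ι R N) {r : R} (hr : r ≠ 0) (hNM : r • N ≤ M) :
    ∃ (bM' : Basis ι R M) (bN' : Basis ι R N) (a : ι → R),
      ∀ i, r • (bN' i : V) = a i • (bM' i : V) := by
  let e : N ≃ₗ[R] (r • N).comap M.subtype :=
    (N.equivMapOfInjective _ (smul_right_injective V hr)).trans (comapSubtypeEquivOfLe hNM).symm
  have hrank : finrank R ((r • N).comap M.subtype) = finrank R M := by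
    rw [← e.finrank_eq, finrank_eq_nat_card_basis bN, finrank_eq_nat_card_basis bM]
  obtain ⟨bM', a, bN', h⟩ := exists_smith_normal_form_of_rank_eq bM hrank
  refine ⟨bM', bN'.map e.symm, a, fun i ↦ ?_⟩
  have hsmul : ∀ x, r • ((e.symm x : N) : V) = ((x : M) : V) := fun x ↦ by
    conv_rhs => rw [← e.apply_symm_apply x]
    rfl
  simpa [hsmul] using congr_arg ((↑) : M → V) (h i)

end PID

section DVR

variable {R K V : Type*} [CommRing R] [IsDomain R] [IsDiscreteValuationRing R]
  [Field K] [Algebra R K] [IsFractionRing R K]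
  [AddCommGroup V] [Module K V] [Module R V] [IsScalarTower R K V] {ϖ : R}

theorem IsDiscreteValuationRing.exists_pow_smul_mem_of_span_eq_top (hϖ : Irreducible ϖ)
    {M : Submodule R V} (hM : span K (M : Set V) = ⊤) (x : V) :
    ∃ n : ℕ, ϖ ^ n • x ∈ M := by
  have hx : x ∈ span K (M : Set V) := hM ▸ mem_top
  obtain ⟨y, hy, z, rfl⟩ := (IsLocalization.mem_span_iff R⁰).mp hx
  obtain ⟨n, u, hz⟩ := eq_unit_mul_pow_irreducible (nonZeroDivisors.coe_ne_zero z) hϖ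
  refine ⟨n, ?_⟩
  have hzy : (z : R) • IsLocalization.mk' K (1 : R) z • y = y := by
    rw [← smul_assoc, IsLocalization.smul_mk'_self, map_one, one_smul]
  have hϖn : ϖ ^ n = ((u⁻¹ : Rˣ) : R) * z := by rw [hz, ← mul_assoc, Units.inv_mul, one_mul]
  rw [hϖn, mul_smul, hzy]
  exact M.smul_mem _ (by simpa using hy)

theorem IsDiscreteValuationRing.exists_pow_smul_le (hϖ : Irreducible ϖ)
    {M N : Submodule R V} (hM : span K (M : Set V) = ⊤) (hN : N.FG) :
    ∃ k : ℕ, ϖ ^ k • N ≤ M := by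
  choose n hn using exists_pow_smul_mem_of_span_eq_top hϖ hM
  obtain ⟨s, rfl⟩ := hN
  refine ⟨s.sup n, ?_⟩
  rw [smul_span, span_le]
  rintro _ ⟨x, hx, rfl⟩
  show ϖ ^ s.sup n • x ∈ M
  rw [← pow_sub_mul_pow ϖ (Finset.le_sup hx), mul_smul]
  exact M.smul_mem _ (hn x)

variable (K) in
theorem IsDiscreteValuationRing.exists_basis_zpow_smul_of_pow_smul_le (hϖ : Irreducible ϖ)
    {ι : Type*} [Finite ι] {M N : Submodule R V} (bM : Basis ι R M) (bN : Basis ι R N) {k : ℕ}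
    (hk : ϖ ^ k • N ≤ M) :
    ∃ (bM' : Basis ι R M) (bN' : Basis ι R N) (g : ι → ℤ),
      ∀ i, (bN' i : V) = algebraMap R K ϖ ^ g i • (bM' i : V) := by
  have := Module.IsTorsionFree.trans_faithfulSMul R K V
  have hϖk : ϖ ^ k ≠ 0 := pow_ne_zero k hϖ.ne_zero
  obtain ⟨bM', bN', a, h⟩ := exists_basis_smul_eq_smul_of_smul_le bM bN hϖk hk
  have ha : ∀ i, a i ≠ 0 := fun i hai ↦ bN'.ne_zero i <| by
    simpa [hai, smul_eq_zero_iff_right hϖk] using h i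
  choose m u hu using fun i ↦ eq_unit_mul_pow_irreducible (ha i) hϖ
  refine ⟨bM'.unitsSMul u, bN', fun i ↦ m i - k, fun i ↦ ?_⟩
  have hπ : algebraMap R K ϖ ≠ 0 :=
    (map_ne_zero_iff _ (IsFractionRing.injective R K)).mpr hϖ.ne_zero
  have hlhs : algebraMap R K ϖ ^ k • (bN' i : V) = (u i : R) • ϖ ^ m i • (bM' i : V) := by
    rw [← map_pow, algebraMap_smul, h i, hu i, mul_smul]
  have hpow : algebraMap R K ϖ ^ k * algebraMap R K ϖ ^ ((m i : ℤ) - k) =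
      algebraMap R K ϖ ^ m i := by
    rw [← zpow_natCast, ← zpow_add₀ hπ, add_sub_cancel, zpow_natCast]
  apply smul_right_injective V (pow_ne_zero k hπ)
  dsimp only
  rw [hlhs, smul_smul (algebraMap R K ϖ ^ k), hpow, ← map_pow, algebraMap_smul,
    Basis.unitsSMul_apply, Units.smul_def, Submodule.coe_smul, smul_comm]

end DVR

section BTLattice

variable {R K : Type*} [CommRing R] [Field K] [Algebra R K]

instance BTLattice.isLattice (M : BTLattice R K) : M.toSubmodule.IsLattice K :=
  ⟨M.fg, M.spans⟩

variable [IsDomain R] [IsPrincipalIdealRing R] [IsFractionRing R K]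

noncomputable def BTLattice.finBasis (M : BTLattice R K) : Basis (Fin 2) R M.toSubmodule :=
  finBasisOfFinrankEq R M.toSubmodule (by simpa using IsLattice.finrank_of_pi K M.toSubmodule)

end BTLattice

/-- Let `R` be a discrete valuation ring with uniformiser `ϖ` and fraction
field `K`, and `M`, `L` two `R`-lattices in `K²`. Then there are an `R`-basis `(e₀, e₁)` of `M`
and an antitone `f : Fin 2 → ℤ` such that `(ϖ ^ f 0 • e₀, ϖ ^ f 1 • e₁)` is an `R`-basis
of `L`. -/
theorem exists_normal_basis {R : Type*} [CommRing R] [IsDomain R] [IsDiscreteValuationRing R]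
    {K : Type*} [Field K] [Algebra R K] [IsFractionRing R K]
    (ϖ : R) (hϖ : Irreducible ϖ) (M L : BTLattice R K) :
    ∃ (bM : Module.Basis (Fin 2) R M.toSubmodule) (bL : Module.Basis (Fin 2) R L.toSubmodule)
      (f : Fin 2 → ℤ), Antitone f ∧
      ∀ i, (bL i : Fin 2 → K) = (algebraMap R K ϖ) ^ (f i) • (bM i : Fin 2 → K) := by
  obtain ⟨k, hk⟩ := IsDiscreteValuationRing.exists_pow_smul_le hϖ M.spans L.fg
  obtain ⟨bM, bL, g, hg⟩ :=
    IsDiscreteValuationRing.exists_basis_zpow_smul_of_pow_smul_le K hϖ M.finBasis L.finBasis hk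
  obtain ⟨σ, hσ⟩ := Tuple.exists_perm_antitone_comp g
  exact ⟨bM.reindex σ.symm, bL.reindex σ.symm, g ∘ σ, hσ, fun i ↦ by simpa using hg (σ i)⟩
end

section
/- Let R be a discrete valuation ring with uniformiser ϖ and fraction field K, and let M and L be R-lattices in K². If (e₀, e₁) and (e₀', e₁') are R-bases of M and f, f' : Fin 2 → ℤ are antitone functions such that (ϖ^{f 0}·e₀, ϖ^{f 1}·e₁) and (ϖ^{f' 0}·e₀', ϖ^{f' 1}·e₁') are both R-bases of L, then f = f'. In particular the pair of integers (f 0, f 1) depends only on M and L. -/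
/-- The indexed family `b` is an `R`-basis of the submodule `M`: it is `R`-linearly
independent and its `R`-span is `M`. -/
structure IsBasisOn (R : Type*) [CommRing R] {V : Type*} [AddCommGroup V] [Module R V]
    {ι : Type*} (b : ι → V) (M : Submodule R V) : Prop where
  linearIndependent : LinearIndependent R b
  span_range_eq : Submodule.span R (Set.range b) = M

/-! Writing `π` for the image of `ϖ` in `K`, both exponents are read off from the pair `(M, L)`:
`π ^ k • M ≤ L` holds exactly when `f 0 = max f ≤ k`, and `π ^ (-k) • L ≤ M` exactly when
`k ≤ min f = f 1`. Both come from comparing coordinates in `e`, which stays independent over `K`: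
a vector `c • e j` lies in the `R`-span of `e` iff `c ∈ R`, and `π ^ m ∈ R` iff `0 ≤ m` because
`ϖ` is not a unit. -/

open Submodule Set Pointwise

section
variable {R K V ι : Type*} [CommRing R] [Field K] [Algebra R K]
  [AddCommGroup V] [Module K V] [Module R V] [IsScalarTower R K V]

theorem smul_mem_span_range_iff {b : ι → V} (hb : LinearIndependent K b) (c : K) (j : ι) :
    c • b j ∈ span R (range b) ↔ c ∈ (algebraMap R K).range := by
  constructor
  · intro h
    obtain ⟨d, hd⟩ := Finsupp.mem_span_range_iff_exists_finsupp.mp h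
    have := hb.finsuppLinearCombination_injective
      (a₁ := d.mapRange (algebraMap R K) (map_zero _)) (a₂ := Finsupp.single j c) ?_
    · exact ⟨d j, by simpa using congr($this j)⟩
    · simpa [Finsupp.linearCombination_apply, Finsupp.sum_mapRange_index, algebraMap_smul]
        using hd
  · rintro ⟨r, rfl⟩
    rw [algebraMap_smul]
    exact smul_mem _ _ (subset_span (mem_range_self j))

theorem span_range_smul_le_span_range_smul_iff {b : ι → V} (hb : LinearIndependent K b)
    {c d : ι → K} (hd : ∀ i, d i ≠ 0) :
    span R (range fun i => c i • b i) ≤ span R (range fun i => d i • b i) ↔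
      ∀ i, c i / d i ∈ (algebraMap R K).range := by
  have hdb : LinearIndependent K fun i => d i • b i :=
    hb.units_smul fun i => Units.mk0 (d i) (hd i)
  simp only [span_le, range_subset_iff, SetLike.mem_coe]
  refine forall_congr' fun i => ?_
  rw [← smul_mem_span_range_iff hdb, smul_smul, div_mul_cancel₀ _ (hd i)]

theorem zpow_smul_span_range_zpow_smul {π : K} (hπ : π ≠ 0) (b : ι → V) (a : ι → ℤ) (k : ℤ) :
    π ^ k • span R (range fun i => π ^ a i • b i) =
      span R (range fun i => π ^ (a i + k) • b i) := by
  rw [smul_span, smul_set_range]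
  simp_rw [smul_smul, ← zpow_add₀ hπ, add_comm]

variable [IsFractionRing R K] {ϖ : R}

theorem algebraMap_zpow_mem_range_iff (hϖ : Irreducible ϖ) (m : ℤ) :
    algebraMap R K ϖ ^ m ∈ (algebraMap R K).range ↔ 0 ≤ m := by
  refine ⟨fun ⟨a, ha⟩ => ?_, fun hm => ?_⟩
  · by_contra! hm
    obtain ⟨n, rfl⟩ : ∃ n : ℕ, m = -(n + 1 : ℕ) := ⟨(-m - 1).toNat, by omega⟩
    have hπ : algebraMap R K ϖ ≠ 0 :=
      (map_ne_zero_iff _ (IsFractionRing.injective R K)).mpr hϖ.ne_zero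
    have : a * ϖ ^ (n + 1) = 1 := IsFractionRing.injective R K <| by
      rw [map_mul, ha, map_pow, map_one, zpow_neg, zpow_natCast,
        inv_mul_cancel₀ (pow_ne_zero _ hπ)]
    exact hϖ.not_isUnit (isUnit_of_dvd_one ⟨a * ϖ ^ n, by rw [← this]; ring⟩)
  · lift m to ℕ using hm
    exact ⟨ϖ ^ m, by simp⟩

theorem zpow_smul_span_range_le_iff (hϖ : Irreducible ϖ) {b : ι → V}
    (hb : LinearIndependent K b) (a a' : ι → ℤ) (k : ℤ) :
    algebraMap R K ϖ ^ k • span R (range fun i => algebraMap R K ϖ ^ a i • b i) ≤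
        span R (range fun i => algebraMap R K ϖ ^ a' i • b i) ↔ ∀ i, a' i ≤ a i + k := by
  have hπ : algebraMap R K ϖ ≠ 0 :=
    (map_ne_zero_iff _ (IsFractionRing.injective R K)).mpr hϖ.ne_zero
  rw [zpow_smul_span_range_zpow_smul hπ,
    span_range_smul_le_span_range_smul_iff hb fun i => zpow_ne_zero _ hπ]
  refine forall_congr' fun i => ?_
  rw [← zpow_sub₀ hπ, algebraMap_zpow_mem_range_iff hϖ, sub_nonneg]

theorem mem_upperBounds_range_iff_zpow_smul_le (hϖ : Irreducible ϖ) {b : ι → V}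
    (hb : LinearIndependent K b) (a : ι → ℤ) (k : ℤ) :
    k ∈ upperBounds (range a) ↔
      algebraMap R K ϖ ^ k • span R (range b) ≤
        span R (range fun i => algebraMap R K ϖ ^ a i • b i) := by
  simpa [upperBounds] using (zpow_smul_span_range_le_iff hϖ hb 0 a k).symm

theorem mem_lowerBounds_range_iff_zpow_smul_le (hϖ : Irreducible ϖ) {b : ι → V}
    (hb : LinearIndependent K b) (a : ι → ℤ) (k : ℤ) :
    k ∈ lowerBounds (range a) ↔
      algebraMap R K ϖ ^ (-k) • span R (range fun i => algebraMap R K ϖ ^ a i • b i) ≤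
        span R (range b) := by
  simpa [lowerBounds, ← sub_eq_add_neg] using (zpow_smul_span_range_le_iff hϖ hb a 0 (-k)).symm

end

section
variable {α : Type*}

theorem Antitone.isGreatest_range_fin_two [Preorder α] {f : Fin 2 → α} (hf : Antitone f) :
    IsGreatest (range f) (f 0) :=
  ⟨mem_range_self 0, forall_mem_range.2 fun i => hf (Fin.zero_le i)⟩

theorem Antitone.isLeast_range_fin_two [Preorder α] {f : Fin 2 → α} (hf : Antitone f) :
    IsLeast (range f) (f 1) :=
  ⟨mem_range_self 1, forall_mem_range.2 fun i => hf (Fin.le_last i)⟩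

theorem Antitone.eq_of_upperBounds_range_eq_of_lowerBounds_range_eq [PartialOrder α]
    {f f' : Fin 2 → α} (hf : Antitone f) (hf' : Antitone f')
    (hu : upperBounds (range f) = upperBounds (range f'))
    (hl : lowerBounds (range f) = lowerBounds (range f')) : f = f' := by
  have h0 : f 0 = f' 0 := ((isLUB_congr hu).mp hf.isGreatest_range_fin_two.isLUB).unique
    hf'.isGreatest_range_fin_two.isLUB
  have h1 : f 1 = f' 1 := ((isGLB_congr hl).mp hf.isLeast_range_fin_two.isGLB).unique
    hf'.isLeast_range_fin_two.isGLB
  ext i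
  fin_cases i <;> assumption

end

theorem normal_basis_exponents_unique_general {R : Type*} [CommRing R]
    {K : Type*} [Field K] [Algebra R K] [IsFractionRing R K]
    (ϖ : R) (hϖ : Irreducible ϖ) (M L : BTLattice R K)
    (e e' : Fin 2 → (Fin 2 → K))
    (he : IsBasisOn R e M.toSubmodule) (he' : IsBasisOn R e' M.toSubmodule)
    (f f' : Fin 2 → ℤ) (hf : Antitone f) (hf' : Antitone f')
    (hL : IsBasisOn R (fun i => (algebraMap R K ϖ) ^ (f i) • e i) L.toSubmodule)
    (hL' : IsBasisOn R (fun i => (algebraMap R K ϖ) ^ (f' i) • e' i) L.toSubmodule) :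
    f = f' := by
  have heK := (LinearIndependent.iff_fractionRing R K).mp he.linearIndependent
  have he'K := (LinearIndependent.iff_fractionRing R K).mp he'.linearIndependent
  refine hf.eq_of_upperBounds_range_eq_of_lowerBounds_range_eq hf'
    (ext fun k => ?_) (ext fun k => ?_)
  · rw [mem_upperBounds_range_iff_zpow_smul_le hϖ heK,
      mem_upperBounds_range_iff_zpow_smul_le hϖ he'K,
      he.span_range_eq, he'.span_range_eq, hL.span_range_eq, hL'.span_range_eq]
  · rw [mem_lowerBounds_range_iff_zpow_smul_le hϖ heK,
      mem_lowerBounds_range_iff_zpow_smul_le hϖ he'K,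
      he.span_range_eq, he'.span_range_eq, hL.span_range_eq, hL'.span_range_eq]

/-- Let `R` be a discrete valuation ring with uniformiser `ϖ` and fraction
field `K`, and `M`, `L` two `R`-lattices in `K²`. If `e` and `e'` are `R`-bases of `M` and
`f, f' : Fin 2 → ℤ` are antitone functions such that `(ϖ ^ f 0 • e 0, ϖ ^ f 1 • e 1)` and
`(ϖ ^ f' 0 • e' 0, ϖ ^ f' 1 • e' 1)` are both `R`-bases of `L`, then `f = f'`. -/
theorem normal_basis_exponents_unique {R : Type*} [CommRing R] [IsDomain R]
    [IsDiscreteValuationRing R] {K : Type*} [Field K] [Algebra R K] [IsFractionRing R K]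
    (ϖ : R) (hϖ : Irreducible ϖ) (M L : BTLattice R K)
    (e e' : Fin 2 → (Fin 2 → K))
    (he : IsBasisOn R e M.toSubmodule) (he' : IsBasisOn R e' M.toSubmodule)
    (f f' : Fin 2 → ℤ) (hf : Antitone f) (hf' : Antitone f')
    (hL : IsBasisOn R (fun i => (algebraMap R K ϖ) ^ (f i) • e i) L.toSubmodule)
    (hL' : IsBasisOn R (fun i => (algebraMap R K ϖ) ^ (f' i) • e' i) L.toSubmodule) :
    f = f' :=
  normal_basis_exponents_unique_general ϖ hϖ M L e e' he he' f f' hf hf' hL hL'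
end

section
/- Let X be a simple graph on a vertex type V which is a tree and locally finite, and assume every vertex v of X has degree at least 2. Let A be a commutative ring, M an A-module, and w : V → A^× a weight function. Define the Laplacian Δ_w : Maps(E(X), M) → Maps(V, M) by (Δ_w f)(v) = w(v) • ∑_{e ∈ E_v} f(e), where E_v is the (finite) set of edges of X incident to v. Then Δ_w is surjective: for every function F : V → M there exists f : E(X) → M with Δ_w f = F. -/
/-!
Root the tree at some vertex `r`. A vertex has at most one neighbour closer to `r`, so, having
degree at least two, every vertex `v` has a neighbour `next v` one step farther from `r`, and the
edges `s(v, next v)` are pairwise distinct. Put a value `a v` on the edge `s(v, next v)` and `0`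
on every other edge: the incidence sum at `v` becomes `a v + ∑_{next u = v} a u`, which can be
made equal to any prescribed value by defining `a` by recursion on the distance to `r`, the
vertices `u` with `next u = v` being closer to `r` than `v`.
-/

/-- The *Laplacian of weight `w`* of a locally finite simple graph `X`: it sends a function
`f : E(X) → M` on the edges to the function `v ↦ w v • ∑_{e ∈ E_v} f e` on the vertices,
where `E_v` is the (finite) set of edges incident to `v`. -/
noncomputable def SimpleGraph.laplace {V : Type*} [DecidableEq V] (X : SimpleGraph V)
    [∀ v, Fintype (X.neighborSet v)] {A : Type*} [CommRing A] (M : Type*) [AddCommGroup M]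
    [Module A M] (w : V → Aˣ) (f : X.edgeSet → M) (v : V) : M :=
  (w v : A) • ∑ e : X.incidenceSet v, f ⟨e.1, X.incidenceSet_subset v e.2⟩

open Finset

namespace SimpleGraph

variable {V : Type*} {G : SimpleGraph V}

lemma sum_incidenceSet_eq_sum_neighborFinset [∀ v, Fintype (G.neighborSet v)] [DecidableEq V]
    {M : Type*} [AddCommMonoid M] (f : Sym2 V → M) (v : V) :
    ∑ e : G.incidenceSet v, f e = ∑ u ∈ G.neighborFinset v, f s(v, u) := by
  rw [← Fintype.sum_equiv (G.incidenceSetEquivNeighborSet v).symm (fun u => f s(v, u.1)) _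
    (fun _ => rfl)]
  exact sum_set_coe (f := fun u => f s(v, u)) (G.neighborSet v)

structure OutwardChoice (G : SimpleGraph V) where
  next : V → V
  adj_next : ∀ v, G.Adj v (next v)
  height : V → ℕ
  height_next : ∀ v, height (next v) = height v + 1

namespace OutwardChoice

variable (o : G.OutwardChoice)

lemma next_next_ne (v : V) : o.next (o.next v) ≠ v := by
  intro h
  have := o.height_next (o.next v)
  rw [h, o.height_next v] at this
  omega

lemma injective_mk_next : Function.Injective fun v => s(v, o.next v) := by
  intro u v h
  rcases Sym2.eq_iff.mp h with ⟨huv, -⟩ | ⟨hu, hv⟩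
  · exact huv
  · exact absurd (hu ▸ hv) (o.next_next_ne v)

variable [∀ v, Fintype (G.neighborSet v)] [DecidableEq V] {M : Type*} [AddCommGroup M]

noncomputable def solve (g : V → M) (v : V) : M :=
  g v - ∑ u ∈ ((G.neighborFinset v).filter (o.next · = v)).attach, solve g u.1
termination_by o.height v
decreasing_by
  have := o.height_next u
  rw [(mem_filter.mp u.2).2] at this
  omega

lemma solve_add_sum_children (g : V → M) (v : V) :
    o.solve g v + ∑ u ∈ G.neighborFinset v with o.next u = v, o.solve g u = g v := by
  rw [solve, sum_attach, sub_add_cancel]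

noncomputable def edgeFun (g : V → M) : Sym2 V → M :=
  Function.extend (fun v => s(v, o.next v)) (o.solve g) 0

lemma edgeFun_mk (g : V → M) (v u : V) :
    o.edgeFun g s(v, u) =
      (if u = o.next v then o.solve g v else 0) + (if o.next u = v then o.solve g u else 0) := by
  by_cases hu : u = o.next v
  · subst hu
    rw [if_pos rfl, if_neg (o.next_next_ne v), add_zero]
    exact o.injective_mk_next.extend_apply _ _ v
  by_cases hv : o.next u = v
  · subst hv
    rw [if_neg hu, if_pos rfl, zero_add, Sym2.eq_swap]
    exact o.injective_mk_next.extend_apply _ _ u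
  rw [if_neg hu, if_neg hv, add_zero]
  refine Function.extend_apply' _ _ _ ?_
  rintro ⟨x, hx⟩
  rcases Sym2.eq_iff.mp hx with ⟨rfl, rfl⟩ | ⟨rfl, rfl⟩ <;> simp_all

lemma sum_incidenceSet_edgeFun (g : V → M) (v : V) :
    ∑ e : G.incidenceSet v, o.edgeFun g e = g v := by
  have hnext : o.next v ∈ G.neighborFinset v := (G.mem_neighborFinset _ _).mpr (o.adj_next v)
  rw [sum_incidenceSet_eq_sum_neighborFinset, sum_congr rfl fun u _ => o.edgeFun_mk g v u,
    sum_add_distrib, sum_ite_eq', if_pos hnext, ← sum_filter]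
  exact o.solve_add_sum_children g v

end OutwardChoice

lemma IsAcyclic.eq_penultimate_of_adj_of_dist_lt (hG : G.IsAcyclic) {r v w : V}
    {p : G.Walk r v} (hp : p.IsPath) (hadj : G.Adj v w) (hreach : G.Reachable r w)
    (hlt : G.dist r w < G.dist r v) : w = p.penultimate := by
  classical
  obtain ⟨q, hq, hq_len⟩ := hreach.exists_path_of_dist
  have hv : v ∉ q.support := fun hv => by
    have := dist_le (q.takeUntil v hv)
    have := q.length_takeUntil_le_length hv
    omega
  exact hG.eq_penultimate_of_adj_end hp hadj
    (hG.mem_support_of_ne_mem_support_of_adj_of_isPath hp hq hadj hv)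

lemma IsTree.exists_adj_dist_eq_add_one [∀ v, Fintype (G.neighborSet v)] (hG : G.IsTree)
    (r : V) {v : V} (hdeg : 2 ≤ G.degree v) : ∃ w, G.Adj v w ∧ G.dist r w = G.dist r v + 1 := by
  by_contra! hfar
  obtain ⟨p, hp, -⟩ := (hG.connected r v).exists_path_of_dist
  have hsub : G.neighborFinset v ⊆ {p.penultimate} := fun w hw => by
    have hadj := (G.mem_neighborFinset v w).mp hw
    have hnear : G.dist r w < G.dist r v := by
      have := hG.dist_eq_dist_add_one_of_adj r hadj
      have := hfar w hadj
      omega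
    exact mem_singleton.mpr (hG.isAcyclic.eq_penultimate_of_adj_of_dist_lt hp hadj
      (hG.connected r w) hnear)
  have := card_le_card hsub
  rw [card_neighborFinset_eq_degree, card_singleton] at this
  omega

lemma IsTree.nonempty_outwardChoice [∀ v, Fintype (G.neighborSet v)] (hG : G.IsTree)
    (hdeg : ∀ v, 2 ≤ G.degree v) : Nonempty G.OutwardChoice := by
  obtain ⟨r⟩ := hG.connected.nonempty
  choose next hnext using fun v => hG.exists_adj_dist_eq_add_one r (hdeg v)
  exact ⟨⟨next, fun v => (hnext v).1, G.dist r, fun v => (hnext v).2⟩⟩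

end SimpleGraph

/-- Let `X` be a locally finite simple graph on `V` which is a tree, in which
every vertex has degree at least `2`. Let `A` be a commutative ring, `M` an `A`-module and
`w : V → A^×` a weight function. Then the Laplacian `Δ_w : Maps(E(X), M) → Maps(V, M)`,
`(Δ_w f) v = w v • ∑_{e ∈ E_v} f e`, is surjective. -/
theorem laplace_surjective {V : Type*} [DecidableEq V] {X : SimpleGraph V}
    [∀ v, Fintype (X.neighborSet v)] (htree : X.IsTree)
    {A : Type*} [CommRing A] (M : Type*) [AddCommGroup M] [Module A M]
    (w : V → Aˣ) (hdeg : ∀ v, 2 ≤ X.degree v) :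
    Function.Surjective (X.laplace M w) := by
  intro F
  obtain ⟨o⟩ := htree.nonempty_outwardChoice hdeg
  refine ⟨fun e => o.edgeFun (fun v => (w v)⁻¹ • F v) e, funext fun v => ?_⟩
  rw [SimpleGraph.laplace, o.sum_incidenceSet_edgeFun, ← Units.smul_def, smul_inv_smul]
end
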